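/- arXiv:2312.00394 — 12 statements merged into one kernel-verified Lean document; each statement's English description precedes it below -/
import Mathlib

section
/- Let a be a bit in {0,1} and let ā denote its complement. For any binary string w, the string a·ā·w can be derived from the single-letter string a by a finite sequence of reverse-complement duplications of length 1 (each duplication takes a single letter and inserts its complement immediately after it). -/
/-- One reverse-complement duplication of length `k`: a `k`-factor `v` of `x`
gets a reverse-complement copy inserted right after it. -/
def RCStep {q : ℕ} (bar : ZMod q → ZMod q) (k : ℕ) (x y : List (ZMod q)) : Prop :=
  ∃ u v w : List (ZMod q), v.length = k ∧ x = u ++ v ++ w ∧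
    y = u ++ v ++ (v.map bar).reverse ++ w

/-- Finitely many (possibly zero) reverse-complement duplications of length `k`. -/
def RCDerives {q : ℕ} (bar : ZMod q → ZMod q) (k : ℕ) :
    List (ZMod q) → List (ZMod q) → Prop :=
  Relation.ReflTransGen (RCStep bar k)

lemma two_cases (a x : ZMod 2) : x = a ∨ x = 1 - a := by revert a x; decide

/-- For a bit `a` and any binary string `w`, the string `a·ā·w` can be derived
from the single-letter string `a` by reverse-complement duplications of length 1. -/
theorem stmt0 (a : ZMod 2) (w : List (ZMod 2)) :
    RCDerives (fun b => 1 - b) 1 [a] (a :: (1 - a) :: w) := by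
  induction w with
  | nil =>
    exact Relation.ReflTransGen.single ⟨[], [a], [], rfl, rfl, rfl⟩
  | cons x w ih =>
    rcases two_cases a x with h | h
    · refine ih.tail ⟨[a], [1 - a], w, rfl, rfl, ?_⟩
      simp only [List.map, List.reverse_singleton, h]
      norm_num
    · refine ih.tail ⟨[], [a], (1 - a) :: w, rfl, rfl, ?_⟩
      simp [h]
end

section
/- Over the binary alphabet, the maximal size of a length-n code correcting any number of reverse-complement duplications of length 1 equals 2. Consequently the coding capacity is 0. -/
/-- `C` is a length-`n` code correcting any number of length-`k`
reverse-complement duplications: distinct codewords have disjoint descendant cones. -/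
def IsRCCode {q : ℕ} (bar : ZMod q → ZMod q) (k n : ℕ) (C : Finset (List (ZMod q))) : Prop :=
  (∀ c ∈ C, c.length = n) ∧
    ∀ c ∈ C, ∀ c' ∈ C, c ≠ c' →
      ∀ z, RCDerives bar k c z → ¬ RCDerives bar k c' z

/-- The maximal size of such a code. -/
noncomputable def maxRCCode {q : ℕ} (bar : ZMod q → ZMod q) (k n : ℕ) : ℕ :=
  sSup {M : ℕ | ∃ C : Finset (List (ZMod q)), IsRCCode bar k n C ∧ C.card = M}

namespace RCAux

abbrev B := ZMod 2
abbrev f : B → B := fun b => 1 - b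

lemma one_sub_eq (b : B) : 1 - b = b + 1 := by revert b; decide

lemma two_cases (a b : B) : b = a + 1 ∨ b = a := by revert a b; decide

lemma some_ne : (some (0 : B)) ≠ some 1 := by decide

lemma step_iff {x y : List B} :
    RCStep f 1 x y ↔ ∃ u a w, x = u ++ a :: w ∧ y = u ++ a :: (1 - a) :: w := by
  constructor
  · rintro ⟨u, v, w, hv, hx, hy⟩
    obtain ⟨a, rfl⟩ : ∃ a, v = [a] := by
      cases v with
      | nil => simp at hv
      | cons a t =>
        cases t with
        | nil => exact ⟨a, rfl⟩
        | cons b t' => simp at hv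
    exact ⟨u, a, w, by simpa using hx, by simpa using hy⟩
  · rintro ⟨u, a, w, hx, hy⟩
    exact ⟨u, [a], w, rfl, by simpa using hx, by simpa using hy⟩

lemma head?_step {x y : List B} (h : RCStep f 1 x y) : y.head? = x.head? := by
  rw [step_iff] at h
  obtain ⟨u, a, w, rfl, rfl⟩ := h
  cases u <;> simp

lemma head?_derives {x y : List B} (h : RCDerives f 1 x y) : y.head? = x.head? := by
  induction h with
  | refl => rfl
  | tail _ hstep ih => rw [head?_step hstep, ih]

lemma derives_cons {x y : List B} (a : B) (h : RCDerives f 1 x y) :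
    RCDerives f 1 (a :: x) (a :: y) := by
  induction h with
  | refl => exact Relation.ReflTransGen.refl
  | tail _ hstep ih =>
    refine ih.tail ?_
    rw [step_iff] at hstep ⊢
    obtain ⟨u, b, w, rfl, rfl⟩ := hstep
    exact ⟨a :: u, b, w, rfl, rfl⟩

/-- alternating word of length m starting with a -/
def alt (a : B) : ℕ → List B
  | 0 => []
  | m + 1 => a :: alt (a + 1) m

lemma alt_succ (a : B) (m : ℕ) : alt a (m + 1) = alt a m ++ [a + m] := by
  induction m generalizing a with
  | zero => simp [alt]
  | succ m ih =>
    show a :: alt (a + 1) (m + 1) = (a :: alt (a + 1) m) ++ [a + ↑(m + 1)]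
    rw [ih (a + 1)]
    simp only [List.cons_append]
    congr 2
    push_cast
    ring

lemma step_append (u : List B) (b : B) :
    RCStep f 1 (u ++ [b]) (u ++ [b] ++ [1 - b]) := by
  rw [step_iff]
  exact ⟨u, b, [], rfl, by simp⟩

lemma alt_grow (a : B) (m : ℕ) :
    RCStep f 1 (alt a (m + 1)) (alt a (m + 2)) := by
  have h1 : alt a (m + 2) = alt a (m + 1) ++ [1 - (a + m)] := by
    rw [alt_succ a (m + 1)]
    congr 2
    rw [one_sub_eq]
    push_cast
    ring
  rw [h1, alt_succ a m]
  exact step_append _ _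

lemma alt_derives (a : B) {m M : ℕ} (hm : 1 ≤ m) (h : m ≤ M) :
    RCDerives f 1 (alt a m) (alt a M) := by
  induction M, h using Nat.le_induction with
  | base => exact Relation.ReflTransGen.refl
  | succ M hM ih =>
    obtain ⟨k, rfl⟩ : ∃ k, M = k + 1 := ⟨M - 1, by omega⟩
    exact ih.tail (alt_grow a k)

lemma add_two (b : B) : b + 1 + 1 = b := by revert b; decide

lemma derives_alt (t : List B) : ∀ a : B, ∃ m, 1 ≤ m ∧ RCDerives f 1 (a :: t) (alt a m) := by
  induction t with
  | nil =>
    intro a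
    exact ⟨1, le_refl _, Relation.ReflTransGen.refl⟩
  | cons b t ih =>
    intro a
    obtain ⟨m, hm, hd⟩ := ih b
    have hlift : RCDerives f 1 (a :: b :: t) (a :: alt b m) := derives_cons a hd
    rcases two_cases a b with h | h
    · refine ⟨m + 1, by omega, ?_⟩
      show RCDerives f 1 (a :: b :: t) (a :: alt (a + 1) m)
      rw [← h]
      exact hlift
    · subst h
      refine ⟨m + 2, by omega, ?_⟩
      refine hlift.tail ?_
      rw [step_iff]
      refine ⟨[], b, alt b m, rfl, ?_⟩
      show alt b (m + 2) = b :: (1 - b) :: alt b m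
      have : alt b (m + 2) = b :: (b + 1) :: alt (b + 1 + 1) m := rfl
      rw [this, add_two, one_sub_eq]

lemma join {x y : List B} {a : B} (hx : x.head? = some a) (hy : y.head? = some a) :
    ∃ z, RCDerives f 1 x z ∧ RCDerives f 1 y z := by
  obtain ⟨t, rfl⟩ : ∃ t, x = a :: t := by
    cases x with
    | nil => simp at hx
    | cons c t =>
      simp only [List.head?_cons, Option.some.injEq] at hx
      exact ⟨t, by rw [hx]⟩
  obtain ⟨s, rfl⟩ : ∃ s, y = a :: s := by
    cases y with
    | nil => simp at hy
    | cons c s =>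
      simp only [List.head?_cons, Option.some.injEq] at hy
      exact ⟨s, by rw [hy]⟩
  obtain ⟨m1, hm1, h1⟩ := derives_alt t a
  obtain ⟨m2, hm2, h2⟩ := derives_alt s a
  exact ⟨alt a (max m1 m2), h1.trans (alt_derives a hm1 (le_max_left _ _)),
    h2.trans (alt_derives a hm2 (le_max_right _ _))⟩

lemma card_le {C : Finset (List B)} {n : ℕ} (hn : 1 ≤ n) (h : IsRCCode f 1 n C) :
    C.card ≤ 2 := by
  classical
  have hhead : ∀ c ∈ C, c.head? = some c.headI := by
    intro c hc
    cases c with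
    | nil =>
      have := h.1 [] hc
      simp only [List.length_nil] at this
      omega
    | cons a t => rfl
  have hle : C.card ≤ (Finset.univ : Finset B).card := by
    refine Finset.card_le_card_of_injOn (fun c => c.headI) (fun c _ => Finset.mem_univ _) ?_
    intro c hc c' hc' heq
    by_contra hne
    have hy : c'.head? = some c.headI := by
      rw [hhead c' hc']
      exact congrArg some heq.symm
    obtain ⟨z, hz, hz'⟩ := join (hhead c hc) hy
    exact h.2 c hc c' hc' hne z hz hz'
  simpa using hle

lemma repl_head? (n : ℕ) (hn : 1 ≤ n) (a : B) : (List.replicate n a).head? = some a := by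
  obtain ⟨k, rfl⟩ : ∃ k, n = k + 1 := ⟨n - 1, by omega⟩
  rfl

lemma code_example (n : ℕ) (hn : 1 ≤ n) :
    IsRCCode f 1 n ({List.replicate n 0, List.replicate n 1} : Finset (List B)) ∧
    ({List.replicate n 0, List.replicate n 1} : Finset (List B)).card = 2 := by
  have hne : List.replicate n (0 : B) ≠ List.replicate n 1 := by
    intro hEq
    have h := congrArg List.head? hEq
    rw [repl_head? n hn 0, repl_head? n hn 1] at h
    exact some_ne h
  constructor
  · constructor
    · intro c hc
      simp only [Finset.mem_insert, Finset.mem_singleton] at hc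
      rcases hc with rfl | rfl <;> simp
    · intro c hc c' hc' hcc z hz hz'
      simp only [Finset.mem_insert, Finset.mem_singleton] at hc hc'
      have h1 := head?_derives hz
      have h2 := head?_derives hz'
      rcases hc with rfl | rfl <;> rcases hc' with rfl | rfl
      · exact hcc rfl
      · rw [repl_head? n hn 0] at h1
        rw [repl_head? n hn 1, h1] at h2
        exact some_ne h2
      · rw [repl_head? n hn 1] at h1
        rw [repl_head? n hn 0, h1] at h2
        exact some_ne h2.symm
      · exact hcc rfl
  · rw [Finset.card_insert_of_notMem (by simpa using hne), Finset.card_singleton]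

end RCAux

/-- Over the binary alphabet, the maximal size of a length-`n` (n ≥ 1) code
correcting any number of length-1 reverse-complement duplications is exactly 2;
consequently the coding capacity is 0. -/
theorem stmt2 :
    (∀ n : ℕ, 1 ≤ n →
      IsGreatest {M : ℕ | ∃ C : Finset (List (ZMod 2)),
        IsRCCode (fun b => 1 - b) 1 n C ∧ C.card = M} 2) ∧
    Filter.limsup
      (fun n : ℕ => Real.logb 2 (maxRCCode (fun b : ZMod 2 => 1 - b) 1 n) / n)
      Filter.atTop = 0 := by
  have hgreat : ∀ n : ℕ, 1 ≤ n →
      IsGreatest {M : ℕ | ∃ C : Finset (List (ZMod 2)),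
        IsRCCode (fun b => 1 - b) 1 n C ∧ C.card = M} 2 := by
    intro n hn
    constructor
    · obtain ⟨hcode, hcard⟩ := RCAux.code_example n hn
      exact ⟨_, hcode, hcard⟩
    · rintro M ⟨C, hC, rfl⟩
      exact RCAux.card_le hn hC
  refine ⟨hgreat, ?_⟩
  have hmax : ∀ n : ℕ, 1 ≤ n → maxRCCode (fun b : ZMod 2 => 1 - b) 1 n = 2 := by
    intro n hn
    exact (hgreat n hn).csSup_eq
  have hev : (fun n : ℕ => Real.logb 2 (maxRCCode (fun b : ZMod 2 => 1 - b) 1 n) / n)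
      =ᶠ[Filter.atTop] (fun n : ℕ => 1 / (n : ℝ)) := by
    rw [Filter.eventuallyEq_iff_exists_mem]
    refine ⟨{n | 1 ≤ n}, Filter.mem_atTop 1, ?_⟩
    intro n hn
    simp only [Set.mem_setOf_eq] at hn
    simp only [hmax n hn]
    norm_num [Real.logb_self_eq_one]
  have htend : Filter.Tendsto
      (fun n : ℕ => Real.logb 2 (maxRCCode (fun b : ZMod 2 => 1 - b) 1 n) / n)
      Filter.atTop (nhds 0) :=
    Filter.Tendsto.congr' hev.symm tendsto_one_div_atTop_nhds_zero_nat
  exact htend.limsup_eq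
end

section
/- The signature of a string is invariant under reverse-complement duplications of length 1: for every nonempty string x over Z_q and every descendant x' of x, σ(x) = σ(x'). -/
/-- The signature of a string: the sequence of leading letters of the minimal
decomposition into maximal blocks over `{a, bar a}`. -/
def signature {q : ℕ} (bar : ZMod q → ZMod q) : List (ZMod q) → List (ZMod q)
  | [] => []
  | a :: rest => a :: signature bar (rest.dropWhile (fun b => b == a || b == bar a))
  termination_by l => l.length
  decreasing_by
    simp only [List.length_cons]
    exact Nat.lt_succ_of_le ((List.dropWhile_sublist _).length_le)


theorem sig_key {q : ℕ} (bar : ZMod q → ZMod q) (hinv : Function.Involutive bar) :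
    ∀ n u (a : ZMod q) w, (u ++ a :: w).length ≤ n →
      signature bar (u ++ a :: w) = signature bar (u ++ a :: bar a :: w) := by
  intro n
  induction n with
  | zero => intro u a w h; simp at h
  | succ n ih =>
    intro u a w h
    cases u with
    | nil =>
      simp only [List.nil_append, signature]
      congr 1
      simp [List.dropWhile]
    | cons c u' =>
      simp only [List.cons_append, signature]
      congr 1
      set p := (fun b => b == c || b == bar c) with hp
      rcases hdw : u'.dropWhile p with _ | ⟨d, t⟩
      · rw [List.dropWhile_append, List.dropWhile_append, hdw]
        simp only [List.isEmpty_nil, if_true]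
        by_cases hpa : p a = true
        · have hpb : p (bar a) = true := by
            simp only [hp, Bool.or_eq_true, beq_iff_eq] at hpa ⊢
            rcases hpa with rfl | rfl
            · right; rfl
            · left; exact hinv c
          simp [List.dropWhile_cons, hpa, hpb]
        · simp only [List.dropWhile_cons, hpa, if_neg, Bool.false_eq_true,
            not_false_eq_true]
          have := ih [] a w (by simp at h ⊢; omega)
          simpa using this
      · rw [List.dropWhile_append, List.dropWhile_append, hdw]
        simp only [List.isEmpty_cons, if_false, Bool.false_eq_true]
        have hsub : (d :: t).length ≤ u'.length := by
          rw [← hdw]; exact (List.dropWhile_sublist _).length_le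
        have hlen : ((d :: t) ++ a :: w).length ≤ n := by
          simp only [List.length_append, List.length_cons] at h hsub ⊢
          omega
        have := ih (d :: t) a w hlen
        simpa using this

theorem sig_step {q : ℕ} (bar : ZMod q → ZMod q) (hinv : Function.Involutive bar)
    {x y : List (ZMod q)} (h : RCStep bar 1 x y) :
    signature bar x = signature bar y := by
  obtain ⟨u, v, w, hv, rfl, rfl⟩ := h
  obtain ⟨a, rfl⟩ : ∃ a, v = [a] := by
    cases v with
    | nil => simp at hv
    | cons a t => cases t with
      | nil => exact ⟨a, rfl⟩
      | cons b t' => simp at hv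
  have := sig_key bar hinv (u ++ a :: w).length u a w le_rfl
  simpa using this

/-- The signature is invariant under reverse-complement duplications of
length 1: it is constant on each descendant cone. -/
theorem stmt4 {q : ℕ} (bar : ZMod q → ZMod q) (hinv : Function.Involutive bar)
    (hfp : ∀ a, bar a ≠ a) (hq : Even q) (x x' : List (ZMod q)) (hx : x ≠ [])
    (h : RCDerives bar 1 x x') : signature bar x = signature bar x' := by
  induction h with
  | refl => rfl
  | tail _ hstep ih => exact ih.trans (sig_step bar hinv hstep)
end

section
/- Two nonempty strings x, y over Z_q (q ≥ 4 even) have a common descendant under reverse-complement duplications of length 1 if and only if they have the same signature: D₁*(x) ∩ D₁*(y) ≠ ∅ ⇔ σ(x) = σ(y). -/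
/-!
A duplication `c ↦ c c̄` only lengthens the block of the minimal decomposition that contains
`c`, so the signature is invariant and strings with a common descendant have equal signatures.
Conversely, a block `a⊕` with `n` letters grows by duplications into the alternating string
`a ā a ā ⋯` of any length `m > 2n` (a repeated letter `a a` is first turned into `a ā a`).
Hence `x` derives the string obtained from `σ(x)` by replacing every letter `a` with the
alternating string of length `m` starting at `a`, for every `m > 2|x|`; taking
`m > 2 max |x| |y|` gives a common descendant of `x` and `y` when `σ(x) = σ(y)`.
-/

variable {q : ℕ} {bar : ZMod q → ZMod q}

lemma signature_cons (a : ZMod q) (t : List (ZMod q)) :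
    signature bar (a :: t) =
      a :: signature bar (t.dropWhile (fun b => b == a || b == bar a)) := by
  rw [signature]

lemma signature_cons_cons (a b : ZMod q) (t : List (ZMod q)) :
    signature bar (a :: b :: t) =
      if b = a ∨ b = bar a then signature bar (a :: t) else a :: signature bar (b :: t) := by
  split_ifs with h
  · rw [signature_cons, signature_cons, List.dropWhile_cons_of_pos (by simpa using h)]
  · rw [signature_cons a (b :: t), List.dropWhile_cons_of_neg (by simpa using h)]

lemma signature_cons_bar_cons (c : ZMod q) (w : List (ZMod q)) :
    signature bar (c :: bar c :: w) = signature bar (c :: w) := by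
  rw [signature_cons_cons, if_pos (Or.inr rfl)]

lemma signature_cons_append_cons_bar_cons (hinv : Function.Involutive bar)
    (c : ZMod q) (w : List (ZMod q)) :
    ∀ (u : List (ZMod q)) (a : ZMod q),
      signature bar (a :: (u ++ c :: bar c :: w)) = signature bar (a :: (u ++ c :: w))
  | [], a => by
    by_cases h : c = a ∨ c = bar a
    · have h' : bar c = a ∨ bar c = bar a :=
        h.symm.imp (by rintro rfl; exact hinv a) (by rintro rfl; rfl)
      simp only [List.nil_append]
      rw [signature_cons_cons, if_pos h, signature_cons_cons, if_pos h', signature_cons_cons, if_pos h]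
    · simp only [List.nil_append]
      rw [signature_cons_cons a c, if_neg h, signature_cons_cons a c, if_neg h,
        signature_cons_bar_cons]
  | e :: u, a => by
    simp only [List.cons_append]
    rw [signature_cons_cons a e, signature_cons_cons a e,
      signature_cons_append_cons_bar_cons hinv c w u a,
      signature_cons_append_cons_bar_cons hinv c w u e]

lemma signature_eq_of_rcStep (hinv : Function.Involutive bar) {x y : List (ZMod q)}
    (h : RCStep bar 1 x y) : signature bar x = signature bar y := by
  obtain ⟨u, v, w, hv, rfl, rfl⟩ := h
  obtain ⟨c, rfl⟩ := List.length_eq_one_iff.mp hv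
  simp only [List.map_cons, List.map_nil, List.reverse_singleton, List.append_assoc,
    List.singleton_append]
  cases u with
  | nil => exact (signature_cons_bar_cons c w).symm
  | cons a u => exact (signature_cons_append_cons_bar_cons hinv c w u a).symm

lemma signature_eq_of_rcDerives (hinv : Function.Involutive bar) {x y : List (ZMod q)}
    (h : RCDerives bar 1 x y) : signature bar x = signature bar y := by
  induction h with
  | refl => rfl
  | tail _ hstep ih => exact ih.trans (signature_eq_of_rcStep hinv hstep)

lemma rcStep_append_append {k : ℕ} {x y : List (ZMod q)} (p s : List (ZMod q))
    (h : RCStep bar k x y) : RCStep bar k (p ++ x ++ s) (p ++ y ++ s) := by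
  obtain ⟨u, v, w, hv, rfl, rfl⟩ := h
  exact ⟨p ++ u, v, w ++ s, hv, by simp, by simp⟩

lemma rcDerives_append_append {k : ℕ} {x y : List (ZMod q)} (p s : List (ZMod q))
    (h : RCDerives bar k x y) : RCDerives bar k (p ++ x ++ s) (p ++ y ++ s) :=
  Relation.ReflTransGen.lift (fun l => p ++ l ++ s) (fun _ _ => rcStep_append_append p s) _ _ h

variable (bar) in
def alternating : ZMod q → ℕ → List (ZMod q)
  | _, 0 => []
  | a, n + 1 => a :: alternating (bar a) n

lemma alternating_add_two (hinv : Function.Involutive bar) (a : ZMod q) (n : ℕ) :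
    alternating bar a (n + 2) = a :: bar a :: alternating bar a n := by
  simp only [alternating, hinv a]

lemma rcStep_alternating_succ (a : ZMod q) (n : ℕ) :
    RCStep bar 1 (alternating bar a (n + 1)) (alternating bar a (n + 2)) := by
  induction n generalizing a with
  | zero => exact ⟨[], [a], [], rfl, rfl, rfl⟩
  | succ n ih => simpa [alternating] using rcStep_append_append [a] [] (ih (bar a))

lemma rcDerives_singleton_alternating (a : ZMod q) (n : ℕ) :
    RCDerives bar 1 [a] (alternating bar a (n + 1)) := by
  induction n with
  | zero => exact Relation.ReflTransGen.refl
  | succ n ih => exact ih.tail (rcStep_alternating_succ a n)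

lemma rcDerives_alternating_of_forall_mem (hinv : Function.Involutive bar) :
    ∀ (l : List (ZMod q)) (a : ZMod q) (m : ℕ), 2 * l.length < m →
      (∀ b ∈ l, b = a ∨ b = bar a) → RCDerives bar 1 (a :: l) (alternating bar a m)
  | [], a, m + 1, _, _ => rcDerives_singleton_alternating a m
  | b :: l, a, m, hm, hl => by
    rw [List.length_cons] at hm
    have hl' (c) (hc : c ∈ l) := hl c (List.mem_cons_of_mem b hc)
    obtain rfl | rfl := hl b List.mem_cons_self
    · obtain ⟨m, rfl⟩ : ∃ m', m = m' + 2 := ⟨m - 2, by omega⟩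
      have hblock := rcDerives_alternating_of_forall_mem hinv l b m (by omega) hl'
      have hcons : RCDerives bar 1 (b :: b :: l) (b :: alternating bar b m) := by
        simpa using rcDerives_append_append [b] [] hblock
      rw [alternating_add_two hinv]
      exact hcons.tail ⟨[], [b], alternating bar b m, rfl, rfl, rfl⟩
    · obtain ⟨m, rfl⟩ : ∃ m', m = m' + 1 := ⟨m - 1, by omega⟩
      have hl'' (c) (hc : c ∈ l) : c = bar a ∨ c = bar (bar a) := by
        rw [hinv a]; exact (hl' c hc).symm
      have hblock := rcDerives_alternating_of_forall_mem hinv l (bar a) m (by omega) hl''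
      simpa [alternating] using rcDerives_append_append [a] [] hblock

lemma rcDerives_flatMap_alternating_signature (hinv : Function.Involutive bar) :
    ∀ (x : List (ZMod q)) (m : ℕ), 2 * x.length < m →
      RCDerives bar 1 x ((signature bar x).flatMap (alternating bar · m))
  | [], _, _ => by rw [signature]; exact Relation.ReflTransGen.refl
  | a :: t, m, hm => by
    set p := fun b => b == a || b == bar a
    have htake := (List.takeWhile_sublist p (l := t)).length_le
    have hdrop := (List.dropWhile_sublist p (l := t)).length_le
    simp only [List.length_cons] at hm
    have hblock := rcDerives_alternating_of_forall_mem hinv (t.takeWhile p) a m (by omega)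
      (fun b hb => by simpa [p] using List.mem_takeWhile_imp hb)
    have hrest := rcDerives_flatMap_alternating_signature hinv (t.dropWhile p) m (by omega)
    have hfirst : RCDerives bar 1 (a :: t) (alternating bar a m ++ t.dropWhile p) := by
      simpa using rcDerives_append_append [] (t.dropWhile p) hblock
    have hnext := rcDerives_append_append (alternating bar a m) [] hrest
    rw [List.append_nil, List.append_nil] at hnext
    rw [signature_cons, List.flatMap_cons]
    exact hfirst.trans hnext
  termination_by x => x.length
  decreasing_by
    simp only [List.length_cons]
    exact Nat.lt_succ_of_le ((List.dropWhile_sublist _).length_le)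

theorem stmt5_general {q : ℕ} (bar : ZMod q → ZMod q)
    (hinv : Function.Involutive bar)
    (x y : List (ZMod q)) :
    (∃ z, RCDerives bar 1 x z ∧ RCDerives bar 1 y z) ↔
      signature bar x = signature bar y := by
  constructor
  · rintro ⟨z, hxz, hyz⟩
    rw [signature_eq_of_rcDerives hinv hxz, signature_eq_of_rcDerives hinv hyz]
  · intro h
    let m := 2 * max x.length y.length + 1
    refine ⟨(signature bar x).flatMap (alternating bar · m),
      rcDerives_flatMap_alternating_signature hinv x m (by omega), ?_⟩
    rw [h]
    exact rcDerives_flatMap_alternating_signature hinv y m (by omega)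

/-- For `q ≥ 4` even, two nonempty `q`-ary strings have a common descendant
under length-1 reverse-complement duplications iff they have the same signature. -/
theorem stmt5 {q : ℕ} (hq4 : 4 ≤ q) (hq : Even q) (bar : ZMod q → ZMod q)
    (hinv : Function.Involutive bar) (hfp : ∀ a, bar a ≠ a)
    (x y : List (ZMod q)) (hx : x ≠ []) (hy : y ≠ []) :
    (∃ z, RCDerives bar 1 x z ∧ RCDerives bar 1 y z) ↔
      signature bar x = signature bar y :=
  stmt5_general bar hinv x y
end

section
/- The code C = { a₀a₁⋯a_{ℓ-1} a_{ℓ-1}^{n-ℓ} : 1 ≤ ℓ ≤ n, each aᵢ ∈ Z_q, aᵢ₊₁ ∉ {aᵢ, āᵢ} } has size q·((q-2)^n − 1)/(q−3) for q ≥ 4 even, and distinct codewords have distinct signatures. -/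
/-- The code of Construction 1: all strings `a₀a₁⋯a_{ℓ-1}a_{ℓ-1}^{n-ℓ}` with
`1 ≤ ℓ ≤ n` and `a_{i+1} ∉ {a_i, ā_i}` for all `i`. -/
def constrCode {q : ℕ} (bar : ZMod q → ZMod q) (n : ℕ) : Set (List (ZMod q)) :=
  {c | ∃ s : List (ZMod q), s ≠ [] ∧ s.length ≤ n ∧
    s.Chain' (fun a b => b ≠ a ∧ b ≠ bar a) ∧
    c = s ++ List.replicate (n - s.length) (s.getLastD 0)}

section Aux
variable {q : ℕ} (bar : ZMod q → ZMod q)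

/-- signature of a chain followed by copies of its last letter is the chain itself -/
lemma sig_enc : ∀ (s : List (ZMod q)), s ≠ [] →
    s.Chain' (fun a b => b ≠ a ∧ b ≠ bar a) → ∀ m,
    signature bar (s ++ List.replicate m (s.getLastD 0)) = s := by
  intro s
  induction s with
  | nil => simp
  | cons a t ih =>
    intro _ hch m
    cases t with
    | nil =>
      simp only [List.getLastD_cons, List.getLastD_nil, List.nil_append, List.cons_append]
      rw [signature]
      have hd : (List.replicate m a).dropWhile (fun b => b == a || b == bar a) = [] := by
        apply List.dropWhile_eq_nil_iff.mpr
        intro x hx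
        simp only [List.mem_replicate] at hx
        simp [hx.2]
      rw [hd, signature]
    | cons b t' =>
      have hab : b ≠ a ∧ b ≠ bar a := (List.isChain_cons_cons.mp hch).1
      have hch' : (b :: t').Chain' (fun a b => b ≠ a ∧ b ≠ bar a) :=
        (List.isChain_cons_cons.mp hch).2
      have hlast : (a :: b :: t').getLastD (0 : ZMod q) = (b :: t').getLastD 0 := by
        simp [List.getLastD_cons]
      rw [hlast, List.cons_append, signature]
      have hpb : (b == a || b == bar a) = false := by
        simp [hab.1, hab.2]
      rw [List.cons_append, List.dropWhile_cons_of_neg (by simp [hab.1, hab.2]),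
        ← List.cons_append, ih (by simp) hch' m]

variable (q) in
def allLists [NeZero q] : ℕ → Finset (List (ZMod q))
  | 0 => {[]}
  | ℓ+1 => (Finset.univ ×ˢ allLists ℓ).image fun p => p.1 :: p.2

lemma mem_allLists [NeZero q] : ∀ (ℓ : ℕ) (s : List (ZMod q)),
    s ∈ allLists q ℓ ↔ s.length = ℓ := by
  intro ℓ
  induction ℓ with
  | zero => intro s; simp [allLists, List.length_eq_zero_iff]
  | succ ℓ ih =>
    intro s
    simp only [allLists, Finset.mem_image, Finset.mem_product, Finset.mem_univ, true_and,
      Prod.exists]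
    constructor
    · rintro ⟨a, t, ht, rfl⟩; simp [(ih t).mp ht]
    · intro hs
      cases s with
      | nil => simp at hs
      | cons a t => exact ⟨a, t, (ih t).mpr (by simpa using hs), rfl⟩

open Classical in
noncomputable def chainsF [NeZero q] (ℓ : ℕ) : Finset (List (ZMod q)) :=
  (allLists q ℓ).filter fun s => s.Chain' (fun a b => b ≠ a ∧ b ≠ bar a)

open Classical in
lemma mem_chainsF [NeZero q] (ℓ : ℕ) (s : List (ZMod q)) :
    s ∈ chainsF bar ℓ ↔ s.length = ℓ ∧ s.Chain' (fun a b => b ≠ a ∧ b ≠ bar a) := by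
  simp [chainsF, mem_allLists, Finset.mem_filter]

lemma card_chainsF [NeZero q] (hinv : Function.Involutive bar) (hfp : ∀ a, bar a ≠ a) :
    ∀ ℓ : ℕ, (chainsF bar (ℓ+1)).card = q * (q-2)^ℓ := by
  classical
  intro ℓ
  induction ℓ with
  | zero =>
    have : chainsF bar 1 = Finset.univ.image (fun a : ZMod q => [a]) := by
      ext s
      simp only [mem_chainsF, Finset.mem_image, Finset.mem_univ, true_and]
      constructor
      · intro ⟨h1, _⟩
        cases s with
        | nil => simp at h1
        | cons a t => exact ⟨a, by simp at h1; simp [h1]⟩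
      · rintro ⟨a, rfl⟩; simp [List.Chain', List.isChain_singleton]
    rw [this, Finset.card_image_of_injective _ (fun a b h => by simpa using h)]
    simp [ZMod.card]
  | succ ℓ ih =>
    have hstep : chainsF bar (ℓ+2) = (chainsF bar (ℓ+1)).biUnion (fun s =>
        (Finset.univ.filter (fun a : ZMod q =>
          (a :: s).Chain' (fun a b => b ≠ a ∧ b ≠ bar a))).image (fun a => a :: s)) := by
      ext x
      simp only [Finset.mem_biUnion, Finset.mem_image, Finset.mem_filter, Finset.mem_univ,
        true_and, mem_chainsF]
      constructor
      · intro ⟨hlen, hch⟩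
        cases x with
        | nil => simp at hlen
        | cons a t =>
          exact ⟨t, ⟨by simpa using hlen, hch.tail⟩, a, hch, rfl⟩
      · rintro ⟨s, ⟨hlen, _⟩, a, hch, rfl⟩
        exact ⟨by simp [hlen], hch⟩
    rw [hstep, Finset.card_biUnion]
    · have hcard : ∀ s ∈ chainsF bar (ℓ+1),
          ((Finset.univ.filter (fun a : ZMod q =>
            (a :: s).Chain' (fun a b => b ≠ a ∧ b ≠ bar a))).image (fun a => a :: s)).card
          = q - 2 := by
        intro s hs
        rw [Finset.card_image_of_injective _ (fun a b h => by simpa using h)]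
        obtain ⟨hlen, hch⟩ := (mem_chainsF bar _ s).mp hs
        cases s with
        | nil => simp at hlen
        | cons h t =>
          have : (Finset.univ.filter (fun a : ZMod q =>
              (a :: h :: t).Chain' (fun a b => b ≠ a ∧ b ≠ bar a)))
              = Finset.univ \ {h, bar h} := by
            ext a
            simp only [Finset.mem_filter, Finset.mem_univ, true_and, Finset.mem_sdiff,
              Finset.mem_insert, Finset.mem_singleton, List.Chain', List.isChain_cons_cons, not_or]
            constructor
            · rintro ⟨⟨h1, h2⟩, -⟩
              exact ⟨fun e => h1 e.symm, fun e => h2 (by rw [e, hinv])⟩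
            · rintro ⟨h1, h2⟩
              exact ⟨⟨fun e => h1 e.symm, fun e => h2 (by rw [e, hinv])⟩, hch⟩
          rw [this, Finset.card_sdiff_of_subset (Finset.subset_univ _)]
          have : ({h, bar h} : Finset (ZMod q)).card = 2 := by
            rw [Finset.card_insert_of_notMem (by simp [(hfp h).symm]), Finset.card_singleton]
          rw [this, Finset.card_univ, ZMod.card]
      rw [Finset.sum_congr rfl hcard, Finset.sum_const, smul_eq_mul, ih]
      ring
    · intro s hs t ht hst
      simp only [Finset.disjoint_left, Finset.mem_image, Finset.mem_filter]
      rintro x ⟨a, _, rfl⟩ ⟨b, _, hx⟩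
      exact hst ((List.cons_eq_cons.mp hx).2).symm
end Aux

lemma geom_nat (r : ℕ) (hr : 1 ≤ r) (n : ℕ) :
    (∑ i ∈ Finset.range n, r ^ i) * (r - 1) = r ^ n - 1 := by
  induction n with
  | zero => simp
  | succ n ih =>
    rw [Finset.sum_range_succ, add_mul, ih]
    have h1 : r ^ n * r = r ^ (n+1) := (pow_succ r n).symm
    have h2 : 1 ≤ r ^ n := Nat.one_le_pow _ _ (by omega)
    have h3 : r ^ n * (r - 1) = r ^ (n+1) - r ^ n := by
      rw [Nat.mul_sub, h1, Nat.mul_one]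
    have h4 : r ^ n ≤ r ^ (n+1) := Nat.pow_le_pow_right (by omega) (by omega)
    omega


/-- Distinct codewords of the construction have distinct signatures, and the
code has size `q·((q-2)^n − 1)/(q−3)` (stated multiplied out by `q - 3`). -/
theorem stmt6 {q : ℕ} (hq4 : 4 ≤ q) (hq : Even q) (bar : ZMod q → ZMod q)
    (hinv : Function.Involutive bar) (hfp : ∀ a, bar a ≠ a) (n : ℕ) (hn : 1 ≤ n) :
    (∀ c ∈ constrCode bar n, ∀ c' ∈ constrCode bar n, c ≠ c' →
      signature bar c ≠ signature bar c') ∧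
    (constrCode bar n).ncard * (q - 3) = q * ((q - 2) ^ n - 1) := by
  haveI : NeZero q := ⟨by omega⟩
  classical
  have hsig : ∀ c ∈ constrCode bar n, c = (signature bar c) ++
      List.replicate (n - (signature bar c).length) ((signature bar c).getLastD 0) := by
    rintro c ⟨s, hne, hlen, hch, rfl⟩
    rw [sig_enc bar s hne hch]
  constructor
  · intro c hc c' hc' hne heq
    apply hne
    rw [hsig c hc, hsig c' hc', heq]
  · have hset : constrCode bar n = ↑((Finset.range n).biUnion (fun i =>
        (chainsF bar (i+1)).image
          (fun s => s ++ List.replicate (n - s.length) (s.getLastD 0)))) := by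
      ext c
      simp only [Finset.coe_biUnion, Set.mem_iUnion, Finset.mem_coe, Finset.mem_image,
        Finset.mem_range, mem_chainsF, constrCode, Set.mem_setOf_eq]
      constructor
      · rintro ⟨s, hne, hlen, hch, rfl⟩
        have hpos : 0 < s.length := List.length_pos_iff.mpr hne
        exact ⟨s.length - 1, by omega, s, ⟨by omega, hch⟩, rfl⟩
      · rintro ⟨i, hi, s, ⟨hlen, hch⟩, rfl⟩
        exact ⟨s, List.length_pos_iff.mp (by omega), by omega, hch, rfl⟩
    rw [hset, Set.ncard_coe_finset]
    rw [Finset.card_biUnion ?disj]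
    case disj =>
      intro i _ j _ hij
      simp only [Finset.disjoint_left, Finset.mem_image]
      rintro c ⟨s, hs, rfl⟩ ⟨t, ht, hct⟩
      obtain ⟨hsl, hsc⟩ := (mem_chainsF bar _ s).mp hs
      obtain ⟨htl, htc⟩ := (mem_chainsF bar _ t).mp ht
      have hs0 : s ≠ [] := List.length_pos_iff.mp (by omega)
      have ht0 : t ≠ [] := List.length_pos_iff.mp (by omega)
      have hts : t = s := by
        rw [← sig_enc bar t ht0 htc (n - t.length), hct, sig_enc bar s hs0 hsc]
      rw [hts] at htl
      exact hij (by omega)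
    have himg : ∀ i ∈ Finset.range n, ((chainsF bar (i+1)).image
        (fun s => s ++ List.replicate (n - s.length) (s.getLastD 0))).card
        = q * (q-2)^i := by
      intro i _
      rw [Finset.card_image_of_injOn, card_chainsF bar hinv hfp]
      intro s hs t ht hst
      obtain ⟨hsl, hsc⟩ := (mem_chainsF bar _ s).mp hs
      obtain ⟨htl, htc⟩ := (mem_chainsF bar _ t).mp ht
      have hs0 : s ≠ [] := List.length_pos_iff.mp (by omega)
      have ht0 : t ≠ [] := List.length_pos_iff.mp (by omega)
      beta_reduce at hst
      rw [← sig_enc bar s hs0 hsc (n - s.length), hst, sig_enc bar t ht0 htc]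
    rw [Finset.sum_congr rfl himg, ← Finset.mul_sum, mul_assoc]
    have h23 : q - 3 = (q - 2) - 1 := by omega
    rw [h23, geom_nat (q-2) (by omega) n]
end

section
/- Let k ≥ 2, let x be a string over Z_q of length at least k+1, and let i ≥ 2. If a letter a occurs at distance i from the end of x (i.e., followed by exactly i letters), then there is a string x' obtainable from x by exactly two reverse-complement duplications of length k in which a occurs at distance i−2 from the end. -/
/-- Push lemma: if `k ≥ 2`, `|x| ≥ k+1`, `i ≥ 2`, and `a` is the `i`-th letter
from the end of `x`, then exactly two length-`k` reverse-complement duplications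
yield a string in which `a` is the `(i−2)`-nd letter from the end. -/
theorem stmt8 {q : ℕ} (bar : ZMod q → ZMod q) (hinv : Function.Involutive bar)
    (hfp : ∀ a, bar a ≠ a) (k i : ℕ) (hk : 2 ≤ k) (hi : 2 ≤ i)
    (x w' w'' : List (ZMod q)) (a : ZMod q)
    (hlen : k + 1 ≤ x.length) (hx : x = w' ++ a :: w'') (hw : w''.length = i) :
    ∃ x' z w1 w2 : List (ZMod q), RCStep bar k x z ∧ RCStep bar k z x' ∧
      x' = w1 ++ a :: w2 ∧ w2.length = i - 2 := by
  classical
  set j1 := min (k - 1) (i - 1) with hj1def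
  have hj1a : 1 ≤ j1 := by omega
  have hj1b : j1 ≤ k - 1 := by omega
  have hj1c : j1 ≤ i - 1 := by omega
  have hwlen : k + 1 ≤ w'.length + 1 + i := by
    have h := hlen
    rw [hx] at h
    simp only [List.length_append, List.length_cons, hw] at h
    omega
  set m := k - 1 - j1 with hmdef
  have hm : m ≤ w'.length := by omega
  set s1 : List (ZMod q) := w''.take j1 with hs1def
  set w1 : List (ZMod q) := w''.drop j1 with hw1def
  have hs1len : s1.length = j1 := by
    simp [hs1def, hw]; omega
  have hw1len : w1.length = i - j1 := by simp [hw1def, hw]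
  set p1 : List (ZMod q) := w'.drop (w'.length - m) with hp1def
  set u1 : List (ZMod q) := w'.take (w'.length - m) with hu1def
  have hp1len : p1.length = m := by simp [hp1def]; omega
  set v1 : List (ZMod q) := p1 ++ a :: s1 with hv1def
  have hv1len : v1.length = k := by
    simp [hv1def, hp1len, hs1len]; omega
  have hxsplit : x = u1 ++ v1 ++ w1 := by
    rw [hx]
    have h1 : u1 ++ p1 = w' := List.take_append_drop _ _
    have h2 : s1 ++ w1 = w'' := List.take_append_drop _ _
    rw [← h1, ← h2]
    simp [hv1def]
  -- z : result of first step
  set z : List (ZMod q) := u1 ++ v1 ++ (v1.map bar).reverse ++ w1 with hzdef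
  have hcopy1 : (v1.map bar).reverse
      = (s1.map bar).reverse ++ bar a :: (p1.map bar).reverse := by
    simp [hv1def]
  -- nonemptiness
  obtain ⟨c, t', ht⟩ : ∃ c t', (s1.map bar).reverse = c :: t' := by
    have hne : (s1.map bar).reverse ≠ [] := by
      intro h
      have := congrArg List.length h
      simp [hs1len] at this
      omega
    exact List.exists_cons_of_ne_nil hne
  have ht'len : t'.length = j1 - 1 := by
    have := congrArg List.length ht
    simp [hs1len] at this
    omega
  obtain ⟨e, w1', hw1e⟩ : ∃ e w1', w1 = e :: w1' := by
    have hne : w1 ≠ [] := by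
      intro h
      have := congrArg List.length h
      simp [hw1len] at this
      omega
    exact List.exists_cons_of_ne_nil hne
  have hw1'len : w1'.length = i - j1 - 1 := by
    have := congrArg List.length hw1e
    simp [hw1len] at this
    omega
  -- second step pieces
  set S : List (ZMod q) := (p1.map bar).reverse ++ [e] with hSdef
  set v2 : List (ZMod q) := t' ++ bar a :: S with hv2def
  set u2 : List (ZMod q) := u1 ++ v1 ++ [c] with hu2def
  have hv2len : v2.length = k := by
    simp [hv2def, hSdef, ht'len, hp1len]; omega
  have hzsplit : z = u2 ++ v2 ++ w1' := by
    rw [hzdef, hcopy1, ht, hw1e]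
    simp [hu2def, hv2def, hSdef]
  set x' : List (ZMod q) := u2 ++ v2 ++ (v2.map bar).reverse ++ w1' with hx'def
  have hcopy2 : (v2.map bar).reverse
      = (S.map bar).reverse ++ a :: (t'.map bar).reverse := by
    simp [hv2def, hinv a]
  refine ⟨x', z, u2 ++ v2 ++ (S.map bar).reverse,
    (t'.map bar).reverse ++ w1', ⟨u1, v1, w1, hv1len, hxsplit, rfl⟩,
    ⟨u2, v2, w1', hv2len, hzsplit, rfl⟩, ?_, ?_⟩
  · rw [hx'def, hcopy2]
    simp
  · simp [ht'len, hw1'len]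
    omega
end

section
/- Being properly spaced persists under duplications: if k ≥ 2, x ∈ Z_q^k is properly spaced in y, and y' is any descendant of y under reverse-complement duplications of length k, then x is properly spaced in y'. -/
/-- Interleave gap strings with the letters of `x`:
`interleave [g0,…,gk] [x0,…,x_{k-1}] = g0 ++ x0 :: g1 ++ x1 :: ⋯ x_{k-1} :: gk`. -/
def interleave {α : Type*} : List (List α) → List α → List α
  | [], _ => []
  | g :: _, [] => g
  | g :: gs, a :: as => g ++ a :: interleave gs as

/-- `x ∈ Z_q^k` is properly spaced in `y`: `x` is a subsequence of `y` via a gap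
decomposition `y = y⁽⁰⁾x₀y⁽¹⁾⋯x_{k-1}y⁽ᵏ⁾`, and when `k` is even all of
`|y⁽¹⁾|,…,|y⁽ᵏ⁾|` are even. -/
def ProperlySpaced {α : Type*} (k : ℕ) (x y : List α) : Prop :=
  x.length = k ∧ ∃ gaps : List (List α), gaps.length = k + 1 ∧
    y = interleave gaps x ∧ (k % 2 = 0 → ∀ g ∈ gaps.tail, g.length % 2 = 0)

/-! Inserting any string into `y = y⁽⁰⁾x₀y⁽¹⁾⋯x_{k-1}y⁽ᵏ⁾` lands inside a single gap `y⁽ⁱ⁾`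
(possibly at a boundary with a letter `xᵢ`), so it keeps `x` a subsequence with the same gaps
except that one of them grows by the inserted length. A duplication inserts `k` letters, which
keeps all gap parities when `k` is even. -/

theorem List.Forall₂.forall_mem_right {α β : Type*} {R : α → β → Prop} {p : α → Prop}
    {q : β → Prop} (hpq : ∀ a b, R a b → p a → q b) {l : List α} {l' : List β}
    (h : List.Forall₂ R l l') (hp : ∀ a ∈ l, p a) : ∀ b ∈ l', q b := by
  induction h with
  | nil => simp
  | cons hab _ ih =>
    simp only [List.mem_cons, forall_eq_or_imp] at hp ⊢
    exact ⟨hpq _ _ hab hp.1, ih hp.2⟩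

theorem exists_interleave_eq_append_insert {α : Type*} (ins : List α) {x : List α}
    {gaps : List (List α)} (hlen : gaps.length = x.length + 1) {A B : List α}
    (h : interleave gaps x = A ++ B) :
    ∃ gaps' : List (List α), interleave gaps' x = A ++ ins ++ B ∧
      List.Forall₂ (fun g g' : List α =>
        g'.length = g.length ∨ g'.length = g.length + ins.length) gaps gaps' := by
  have unchanged : ∀ gs : List (List α),
      List.Forall₂ (fun g g' : List α =>
        g'.length = g.length ∨ g'.length = g.length + ins.length) gs gs :=
    fun _ => List.forall₂_same.mpr fun _ _ => Or.inl rfl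
  induction x generalizing gaps A with
  | nil =>
    obtain ⟨g, rfl⟩ := List.length_eq_one_iff.mp hlen
    refine ⟨[A ++ ins ++ B], rfl, .cons (Or.inr ?_) .nil⟩
    simp only [interleave] at h
    simp only [h, List.length_append]
    omega
  | cons a as ih =>
    obtain ⟨g, gs, rfl⟩ := List.exists_cons_of_length_eq_add_one hlen
    simp only [interleave] at h
    rcases List.append_eq_append_iff.mp h.symm with ⟨t, rfl, hB⟩ | ⟨c, rfl, hc⟩
    · refine ⟨(A ++ ins ++ t) :: gs, ?_, .cons (Or.inr ?_) (unchanged gs)⟩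
      · simp [interleave, hB]
      · simp only [List.length_append]
        omega
    · rcases List.append_eq_cons_iff.mp hc.symm with ⟨rfl, rfl⟩ | ⟨c', rfl, hrest⟩
      · exact ⟨(g ++ ins) :: gs, by simp [interleave], .cons (Or.inr (by simp)) (unchanged gs)⟩
      · obtain ⟨gs', hgs', hrel⟩ := ih (by simpa using hlen) hrest
        exact ⟨g :: gs', by simp [interleave, hgs'], .cons (Or.inl rfl) hrel⟩

theorem ProperlySpaced.insert {α : Type*} {k : ℕ} {x A B : List α} (ins : List α)
    (hps : ProperlySpaced k x (A ++ B)) (hins : k % 2 = 0 → ins.length % 2 = 0) :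
    ProperlySpaced k x (A ++ ins ++ B) := by
  obtain ⟨hx, gaps, hlen, hy, hpar⟩ := hps
  obtain ⟨gaps', hy', hrel⟩ :=
    exists_interleave_eq_append_insert ins (by rw [hlen, hx]) hy.symm
  refine ⟨hx, gaps', by rw [← hrel.length_eq, hlen], hy'.symm, fun hk => ?_⟩
  have htail := List.forall₂_drop 1 hrel
  rw [List.drop_one, List.drop_one] at htail
  refine htail.forall_mem_right (p := fun g => g.length % 2 = 0) (q := fun g => g.length % 2 = 0)
    (fun g g' hg hg_even => ?_) (hpar hk)
  rcases hg with hg | hg <;> omega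

theorem ProperlySpaced.of_rcStep {q : ℕ} {bar : ZMod q → ZMod q} {k : ℕ}
    {x y y' : List (ZMod q)} (hps : ProperlySpaced k x y) (h : RCStep bar k y y') :
    ProperlySpaced k x y' := by
  obtain ⟨u, v, w, hv, rfl, rfl⟩ := h
  exact hps.insert _ fun hk => by simpa [hv] using hk

theorem stmt9_general {q : ℕ} (bar : ZMod q → ZMod q) (k : ℕ) (x y y' : List (ZMod q))
    (hps : ProperlySpaced k x y) (h : RCDerives bar k y y') :
    ProperlySpaced k x y' := by
  induction h with
  | refl => exact hps
  | tail _ hstep ih => exact ih.of_rcStep hstep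

/-- Proper spacing persists under length-`k` reverse-complement duplications. -/
theorem stmt9 {q : ℕ} (bar : ZMod q → ZMod q) (hinv : Function.Involutive bar)
    (hfp : ∀ a, bar a ≠ a) (k : ℕ) (hk : 2 ≤ k) (x y y' : List (ZMod q))
    (hps : ProperlySpaced k x y) (h : RCDerives bar k y y') :
    ProperlySpaced k x y' :=
  stmt9_general bar k x y y' hps h
end

section
/- If k ≥ 2 and x ∈ Z_q^k is properly spaced in y, then there exists a string v such that y can be transformed into v·x by finitely many reverse-complement duplications of length k (i.e., x can be made a suffix of some descendant of y). -/
namespace Stmt10Aux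

lemma num_aux (k : ℕ) (hk : 2 ≤ k) (d : ℕ) (hpar : k % 2 = 0 → d % 2 = 0) :
    ∃ σ ν : ℕ, d + σ * k = 2 * ν * (k - 1) := by
  rcases Nat.even_or_odd k with hke | hko
  · have hk2 : k % 2 = 0 := Nat.even_iff.mp hke
    obtain ⟨c, hc⟩ : ∃ c, d = 2 * c := ⟨d / 2, by omega⟩
    obtain ⟨qq, r, hcr, hr⟩ : ∃ qq r, (k - 1) * qq + r = c ∧ r < k - 1 :=
      ⟨c / (k - 1), c % (k - 1), Nat.div_add_mod c (k - 1), Nat.mod_lt _ (by omega)⟩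
    obtain ⟨m, hmr⟩ : ∃ m, m + r = k - 1 := ⟨k - 1 - r, by omega⟩
    refine ⟨2 * m, qq + m + 1, ?_⟩
    subst hc
    rw [← hcr]
    have h1 : k - 1 = m + r := by omega
    have h2 : k = m + r + 1 := by omega
    rw [h1, h2]; ring
  · obtain ⟨p, hp⟩ := hko
    obtain ⟨e, he⟩ : ∃ e, p = e + 1 := ⟨p - 1, by omega⟩
    refine ⟨d * (2 * e + 1), d * (e + 1), ?_⟩
    have h1 : k - 1 = 2 * e + 2 := by omega
    have h2 : k = 2 * e + 3 := by omega
    rw [h1, h2]; ring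

variable {q : ℕ} (bar : ZMod q → ZMod q) (k : ℕ)

lemma derives_congr {s₁ s₂ t₁ t₂ : List (ZMod q)} (h₁ : s₁ = s₂) (h₂ : t₁ = t₂)
    (h : RCDerives bar k s₁ t₁) : RCDerives bar k s₂ t₂ := h₁ ▸ h₂ ▸ h

lemma rcderives_step (u v w : List (ZMod q)) (hv : v.length = k) :
    RCDerives bar k (u ++ (v ++ w)) (u ++ (v ++ ((v.map bar).reverse ++ w))) :=
  Relation.ReflTransGen.single ⟨u, v, w, hv, by simp [List.append_assoc], by simp [List.append_assoc]⟩

lemma S_iter (σ : ℕ) : ∀ (A B C : List (ZMod q)), k ≤ B.length →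
    ∃ B', RCDerives bar k (A ++ (B ++ C)) (A ++ (B' ++ C)) ∧
      B'.length = B.length + σ * k := by
  induction σ with
  | zero => exact fun A B C _ => ⟨B, Relation.ReflTransGen.refl, by simp⟩
  | succ n ih =>
    intro A B C hB
    set V := B.take k with hV
    set R := B.drop k with hR
    have hVlen : V.length = k := by
      simp only [hV, List.length_take]; omega
    have hRlen : R.length = B.length - k := by simp [hR]
    have hBVR : B = V ++ R := (List.take_append_drop k B).symm
    have hstep := rcderives_step bar k A V (R ++ C) hVlen
    have hlen2 : (V ++ ((V.map bar).reverse ++ R)).length = B.length + k := by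
      simp only [List.length_append, List.length_reverse, List.length_map, hVlen, hRlen]
      omega
    obtain ⟨B', hd, hlen⟩ := ih A (V ++ ((V.map bar).reverse ++ R)) C (by omega)
    refine ⟨B', Relation.ReflTransGen.trans
      (derives_congr bar k (by rw [hBVR]; simp [List.append_assoc])
        (by simp [List.append_assoc]) hstep) hd, ?_⟩
    rw [hlen, hlen2]; ring

lemma D_iter (hinv : Function.Involutive bar) (hk : 2 ≤ k) :
    ∀ (ν : ℕ) (A B C : List (ZMod q)) (b : ZMod q), B.length = 2 * ν * (k - 1) →
    ∃ T, RCDerives bar k (A ++ ([b] ++ (B ++ C))) (A ++ (T ++ ([b] ++ C))) ∧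
      T.length = B.length + 2 * ν * k := by
  intro ν
  induction ν with
  | zero =>
    intro A B C b hB
    have hB0 : B = [] := List.eq_nil_of_length_eq_zero (by omega)
    subst hB0
    exact ⟨[], Relation.ReflTransGen.refl, by simp⟩
  | succ n ih =>
    intro A B C b hB
    have hBlen : B.length = 2 * n * (k - 1) + 2 * (k - 1) := by rw [hB]; ring
    set P₁ := B.take (k - 1) with hP₁
    set R₁ := B.drop (k - 1) with hR₁
    have hP₁len : P₁.length = k - 1 := by simp only [hP₁, List.length_take]; omega
    have hR₁len : R₁.length = 2 * n * (k - 1) + (k - 1) := by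
      simp only [hR₁, List.length_drop]; omega
    have hB1 : B = P₁ ++ R₁ := (List.take_append_drop _ B).symm
    set P₂ := R₁.take (k - 1) with hP₂
    set R₂ := R₁.drop (k - 1) with hR₂
    have hP₂len : P₂.length = k - 1 := by simp only [hP₂, List.length_take]; omega
    have hR₂len : R₂.length = 2 * n * (k - 1) := by
      simp only [hR₂, List.length_drop]; omega
    have hR₁2 : R₁ = P₂ ++ R₂ := (List.take_append_drop _ R₁).symm
    have hv₁len : (b :: P₁).length = k := by simp [hP₁len]; omega
    have hv₂len : ((bar b) :: P₂).length = k := by simp [hP₂len]; omega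
    -- intermediate strings
    set S0 := A ++ ([b] ++ (B ++ C)) with hS0
    set S1 := A ++ ([b] ++ (P₁ ++ ((P₁.map bar).reverse ++ ([bar b] ++ (P₂ ++ (R₂ ++ C)))))) with hS1
    set S2 := (A ++ ([b] ++ (P₁ ++ ((P₁.map bar).reverse ++ ([bar b] ++ (P₂ ++ (P₂.map bar).reverse)))))) ++ ([b] ++ (R₂ ++ C)) with hS2
    have hstep1 : RCDerives bar k S0 S1 := by
      have := rcderives_step bar k A (b :: P₁) (R₁ ++ C) hv₁len
      refine derives_congr bar k ?_ ?_ this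
      · rw [hS0, hB1]; try simp [List.append_assoc]
      · rw [hS1, hR₁2]; try simp [List.append_assoc]
    have hstep2 : RCDerives bar k S1 S2 := by
      have := rcderives_step bar k (A ++ ([b] ++ (P₁ ++ (P₁.map bar).reverse)))
        ((bar b) :: P₂) (R₂ ++ C) hv₂len
      refine derives_congr bar k ?_ ?_ this
      · rw [hS1]; try simp [List.append_assoc]
      · rw [hS2]; try simp [List.append_assoc, hinv b]
    obtain ⟨T', hdT, hTlen⟩ := ih
      (A ++ ([b] ++ (P₁ ++ ((P₁.map bar).reverse ++ ([bar b] ++ (P₂ ++ (P₂.map bar).reverse))))))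
      R₂ C b hR₂len
    refine ⟨[b] ++ (P₁ ++ ((P₁.map bar).reverse ++ ([bar b] ++ (P₂ ++ ((P₂.map bar).reverse ++ T'))))), ?_, ?_⟩
    · refine Relation.ReflTransGen.trans hstep1 (Relation.ReflTransGen.trans hstep2
        (derives_congr bar k ?_ ?_ hdT))
      · rw [hS2]; try simp [List.append_assoc]
      · simp [List.append_assoc]
    · simp only [List.length_append, List.length_cons, List.length_reverse,
        List.length_map, List.length_nil, hP₁len, hP₂len, hTlen, hR₂len, hB]
      have e1 : 2 * (n + 1) * (k - 1) = 2 * n * (k - 1) + 2 * (k - 1) := by ring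
      have e2 : 2 * (n + 1) * k = 2 * n * k + 2 * k := by ring
      omega

lemma route (hinv : Function.Involutive bar) (hk : 2 ≤ k)
    (A : List (ZMod q)) (a : ZMod q) (B C : List (ZMod q))
    (hB : k ≤ B.length) (hpar : k % 2 = 0 → B.length % 2 = 0) :
    ∃ E, RCDerives bar k (A ++ ([a] ++ (B ++ C))) (A ++ (E ++ ([a] ++ C))) ∧
      k ≤ E.length ∧ (k % 2 = 0 → E.length % 2 = 0) := by
  obtain ⟨σ, ν, hσν⟩ := num_aux k hk B.length hpar
  obtain ⟨B', hd1, hl1⟩ := S_iter bar k σ (A ++ [a]) B C hB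
  obtain ⟨T, hd2, hl2⟩ := D_iter bar k hinv hk ν A B' C a (by omega)
  refine ⟨T, ?_, ?_, ?_⟩
  · refine Relation.ReflTransGen.trans (derives_congr bar k ?_ ?_ hd1) hd2
    · simp [List.append_assoc]
    · simp [List.append_assoc]
  · omega
  · intro hk2
    have h2 : (σ * k) % 2 = 0 := by
      have := Nat.mul_mod σ k 2
      simp [hk2] at this; omega
    have h3 : (2 * ν * k) % 2 = 0 := by
      have e : 2 * ν * k = 2 * (ν * k) := by ring
      omega
    have := hpar hk2
    omega

def chain : List (ZMod q) → List (List (ZMod q)) → List (ZMod q)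
  | [], _ => []
  | _ :: _, [] => []
  | x :: xs, g :: gs => x :: (g ++ chain xs gs)

lemma chain_concat : ∀ (xs : List (ZMod q)) (gs : List (List (ZMod q)))
    (a : ZMod q) (g : List (ZMod q)), xs.length = gs.length →
    chain (xs ++ [a]) (gs ++ [g]) = chain xs gs ++ ([a] ++ g) := by
  intro xs
  induction xs with
  | nil =>
    intro gs a g h
    have : gs = [] := List.eq_nil_of_length_eq_zero (by simpa using h.symm)
    subst this
    simp [chain]
  | cons x xs ih =>
    intro gs a g h
    cases gs with
    | nil => simp at h
    | cons g' gs' =>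
      have h' : xs.length = gs'.length := by simpa using h
      show x :: (g' ++ chain (xs ++ [a]) (gs' ++ [g])) =
        (x :: (g' ++ chain xs gs')) ++ ([a] ++ g)
      rw [ih gs' a g h']
      simp [List.append_assoc]

lemma chain_len_ge : ∀ (xs : List (ZMod q)) (gs : List (List (ZMod q))),
    xs.length = gs.length → xs.length ≤ (chain xs gs).length := by
  intro xs
  induction xs with
  | nil => simp
  | cons x xs ih =>
    intro gs h
    cases gs with
    | nil => simp at h
    | cons g' gs' =>
      have := ih gs' (by simpa using h)
      simp only [chain, List.length_cons, List.length_append]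
      omega

lemma interleave_eq : ∀ (xs : List (ZMod q)) (gs : List (List (ZMod q)))
    (g₀ : List (ZMod q)), gs.length = xs.length →
    interleave (g₀ :: gs) xs = g₀ ++ chain xs gs := by
  intro xs
  induction xs with
  | nil =>
    intro gs g₀ h
    have : gs = [] := List.eq_nil_of_length_eq_zero (by simpa using h)
    subst this
    simp [interleave, chain]
  | cons x xs ih =>
    intro gs g₀ h
    cases gs with
    | nil => simp at h
    | cons g' gs' =>
      simp only [interleave, chain, ih gs' g' (by simpa using h)]

lemma pump (s : List (ZMod q)) (hk : 2 ≤ k) (hs : k ≤ s.length) :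
    ∃ J : List (ZMod q), RCDerives bar k s (s ++ J) ∧ J.length = k := by
  set u := s.take (s.length - k) with hu
  set v := s.drop (s.length - k) with hv
  have hvlen : v.length = k := by simp only [hv, List.length_drop]; omega
  have hsuv : s = u ++ v := (List.take_append_drop _ s).symm
  refine ⟨(v.map bar).reverse, ?_, by simp [hvlen]⟩
  have hstep : RCStep bar k s (s ++ (v.map bar).reverse) :=
    ⟨u, v, [], hvlen, by simp [hsuv], by simp [hsuv, List.append_assoc]⟩
  exact Relation.ReflTransGen.single hstep

lemma build (hinv : Function.Involutive bar) (hk : 2 ≤ k) :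
    ∀ (m : ℕ) (xs : List (ZMod q)) (gs : List (List (ZMod q)))
      (a : ZMod q) (A B C : List (ZMod q)),
      xs.length = m → gs.length = m →
      (k % 2 = 0 → ∀ g ∈ gs, g.length % 2 = 0) →
      k ≤ B.length → (k % 2 = 0 → B.length % 2 = 0) →
      ∃ V, RCDerives bar k (A ++ (chain xs gs ++ ([a] ++ (B ++ C))))
        (V ++ (xs ++ ([a] ++ C))) := by
  intro m
  induction m with
  | zero =>
    intro xs gs a A B C hxs hgs _ hB hBpar
    have hx0 : xs = [] := List.eq_nil_of_length_eq_zero hxs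
    have hg0 : gs = [] := List.eq_nil_of_length_eq_zero hgs
    subst hx0; subst hg0
    obtain ⟨E, hd, _, _⟩ := route bar k hinv hk A a B C hB hBpar
    refine ⟨A ++ E, derives_congr bar k ?_ ?_ hd⟩
    · simp [chain]
    · simp [List.append_assoc]
  | succ n ih =>
    intro xs gs a A B C hxs hgs hgpar hB hBpar
    rcases List.eq_nil_or_concat xs with rfl | ⟨xs', a', hxc⟩
    · simp at hxs
    rcases List.eq_nil_or_concat gs with rfl | ⟨gs', g', hgc⟩
    · simp at hgs
    rw [List.concat_eq_append] at hxc hgc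
    subst hxc; subst hgc
    have hxs' : xs'.length = n := by simpa using hxs
    have hgs' : gs'.length = n := by simpa using hgs
    have hchain : chain (xs' ++ [a']) (gs' ++ [g']) = chain xs' gs' ++ ([a'] ++ g') :=
      chain_concat xs' gs' a' g' (by omega)
    obtain ⟨E, hd, hElen, hEpar⟩ := route bar k hinv hk
      (A ++ chain (xs' ++ [a']) (gs' ++ [g'])) a B C hB hBpar
    obtain ⟨V, hdV⟩ := ih xs' gs' a' A (g' ++ E) ([a] ++ C) hxs' hgs'
      (fun h2 g hg => hgpar h2 g (List.mem_append_left _ hg))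
      (by simp only [List.length_append]; omega)
      (by intro h2; have h3 := hgpar h2 g' (by simp); have h4 := hEpar h2
          simp only [List.length_append]; omega)
    have hd' : RCDerives bar k (A ++ (chain (xs' ++ [a']) (gs' ++ [g']) ++ ([a] ++ (B ++ C))))
        (A ++ (chain xs' gs' ++ ([a'] ++ ((g' ++ E) ++ ([a] ++ C))))) := by
      refine derives_congr bar k ?_ ?_ hd
      · simp [List.append_assoc]
      · rw [hchain]; try simp [List.append_assoc]
    have hdV' : RCDerives bar k (A ++ (chain xs' gs' ++ ([a'] ++ ((g' ++ E) ++ ([a] ++ C)))))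
        (V ++ ((xs' ++ [a']) ++ ([a] ++ C))) := by
      refine derives_congr bar k ?_ ?_ hdV
      · try simp [List.append_assoc]
      · simp [List.append_assoc]
    exact ⟨V, hd'.trans hdV'⟩


end Stmt10Aux

open Stmt10Aux in
/-- If `x ∈ Z_q^k` is properly spaced in `y`, then some descendant of `y` under
length-`k` reverse-complement duplications has `x` as a suffix. -/
theorem stmt10 {q : ℕ} (bar : ZMod q → ZMod q) (hinv : Function.Involutive bar)
    (hfp : ∀ a, bar a ≠ a) (k : ℕ) (hk : 2 ≤ k) (x y : List (ZMod q))
    (hps : ProperlySpaced k x y) :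
    ∃ v : List (ZMod q), RCDerives bar k y (v ++ x) := by
  obtain ⟨hxlen, gaps, hglen, hy, hgpar⟩ := hps
  cases gaps with
  | nil => simp at hglen
  | cons g₀ gs =>
  have hgs : gs.length = k := by simpa using hglen
  rcases List.eq_nil_or_concat x with rfl | ⟨xs', a, hxc⟩
  · simp at hxlen; omega
  rcases List.eq_nil_or_concat gs with rfl | ⟨gs', g, hgc⟩
  · simp at hgs; omega
  rw [List.concat_eq_append] at hxc hgc
  subst hxc; subst hgc
  have hxs' : xs'.length = k - 1 := by
    have := hxlen; simp at this; omega
  have hgs' : gs'.length = k - 1 := by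
    simp at hgs; omega
  have hchain : chain (xs' ++ [a]) (gs' ++ [g]) = chain xs' gs' ++ ([a] ++ g) :=
    chain_concat xs' gs' a g (by omega)
  have hy' : y = g₀ ++ (chain xs' gs' ++ ([a] ++ (g ++ []))) := by
    rw [hy, interleave_eq _ _ _ (by simp at hgs hxlen ⊢; omega), hchain]
    simp [List.append_assoc]
  have hylen : k ≤ y.length := by
    have h1 := chain_len_ge xs' gs' (by omega)
    rw [hy']
    simp only [List.length_append, List.length_cons, List.append_nil,
      List.length_singleton]
    omega
  obtain ⟨J, hdJ, hJlen⟩ := pump bar k y hk hylen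
  have hyJ : y ++ J = g₀ ++ (chain xs' gs' ++ ([a] ++ ((g ++ J) ++ []))) := by
    rw [hy']; simp [List.append_assoc]
  have hgpar' := fun h2 => hgpar h2
  obtain ⟨V, hdV⟩ := build bar k hinv hk (k - 1) xs' gs' a g₀ (g ++ J) []
    hxs' hgs'
    (fun h2 g' hg' => by
      have : g' ∈ (gs' ++ [g]) := List.mem_append_left _ hg'
      exact hgpar h2 g' (by simpa using this))
    (by simp only [List.length_append]; omega)
    (by intro h2
        have h3 : g ∈ (gs' ++ [g]) := by simp
        have h4 := hgpar h2 g (by simpa using h3)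
        simp only [List.length_append]; omega)
  refine ⟨V, Relation.ReflTransGen.trans hdJ (derives_congr bar k hyJ.symm ?_ hdV)⟩
  simp [List.append_assoc]
end

section
/- Synchronization lemma: if k ≥ 2 and x ∈ Z_q^k is properly spaced in y, then there exists a string v such that both y ⟹_k* v·x and y·x ⟹_k* v·x under reverse-complement duplications of length k. -/
theorem List.exists_prefix_of_le_length {α : Type*} {l : List α} {i : ℕ} (h : i ≤ l.length) :
    ∃ l₁ l₂, l = l₁ ++ l₂ ∧ l₁.length = i :=
  ⟨_, _, (l.take_append_drop i).symm, List.length_take_of_le h⟩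

theorem List.exists_suffix_of_le_length {α : Type*} {l : List α} {i : ℕ} (h : i ≤ l.length) :
    ∃ l₁ l₂, l = l₁ ++ l₂ ∧ l₂.length = i :=
  ⟨_, _, (l.take_append_drop (l.length - i)).symm, by simp; omega⟩

theorem length_le_length_interleave {α : Type*} :
    ∀ (x g : List α) (gs : List (List α)), gs.length = x.length →
      x.length ≤ (interleave (g :: gs) x).length
  | [], _, _, _ => Nat.zero_le _
  | _ :: _, _, [], h => by simp at h
  | _ :: x, g, g₁ :: gs, h => by
    have := length_le_length_interleave x g₁ gs (by simpa using h)
    simp [interleave]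
    omega

abbrev revCompl {α : Type*} (bar : α → α) (l : List α) : List α :=
  (l.map bar).reverse

theorem length_revCompl {α : Type*} (bar : α → α) (l : List α) :
    (revCompl bar l).length = l.length := by
  simp [revCompl]

theorem revCompl_revCompl {α : Type*} {bar : α → α} (hinv : Function.Involutive bar)
    (l : List α) : revCompl bar (revCompl bar l) = l := by
  simp [revCompl, List.map_reverse, hinv.comp_self]

namespace RCDerives

variable {q : ℕ} {bar : ZMod q → ZMod q} {k : ℕ}

theorem refl (a : List (ZMod q)) : RCDerives bar k a a :=
  Relation.ReflTransGen.refl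

theorem trans {a b c : List (ZMod q)} (hab : RCDerives bar k a b) (hbc : RCDerives bar k b c) :
    RCDerives bar k a c :=
  Relation.ReflTransGen.trans hab hbc

theorem dup (u v w : List (ZMod q)) (hv : v.length = k) :
    RCDerives bar k (u ++ v ++ w) (u ++ v ++ revCompl bar v ++ w) :=
  .single ⟨u, v, w, hv, rfl, rfl⟩

theorem append_left (s : List (ZMod q)) {a b : List (ZMod q)} (h : RCDerives bar k a b) :
    RCDerives bar k (s ++ a) (s ++ b) := by
  refine Relation.ReflTransGen.lift (s ++ ·) ?_ _ _ h
  rintro _ _ ⟨u, v, w, hv, rfl, rfl⟩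
  exact ⟨s ++ u, v, w, hv, by simp, by simp⟩

theorem append_right (s : List (ZMod q)) {a b : List (ZMod q)} (h : RCDerives bar k a b) :
    RCDerives bar k (a ++ s) (b ++ s) := by
  refine Relation.ReflTransGen.lift (· ++ s) ?_ _ _ h
  rintro _ _ ⟨u, v, w, hv, rfl, rfl⟩
  exact ⟨u, v, w ++ s, hv, by simp, by simp⟩

theorem append_revCompl (u v : List (ZMod q)) (hv : v.length = k) :
    RCDerives bar k (u ++ v) (u ++ v ++ revCompl bar v) := by
  simpa using dup u v [] hv

theorem append_revCompl_append (hinv : Function.Involutive bar) (u v : List (ZMod q))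
    (hv : v.length = k) :
    RCDerives bar k (u ++ v) (u ++ v ++ revCompl bar v ++ v) := by
  have h₂ := append_revCompl (bar := bar) (u ++ v) (revCompl bar v) (by simpa using hv)
  rw [revCompl_revCompl hinv] at h₂
  exact (append_revCompl u v hv).trans h₂

/-- Duplicating the windows `A c B` and `c̄ (Aᴿᶜ) C` in turn carries the block `B ++ C`
from behind `c` to before it, at the price of `2k` letters inserted there. -/
theorem move_block (hinv : Function.Involutive bar) (P A B C T : List (ZMod q)) (c : ZMod q)
    (hAB : A.length + B.length + 1 = k) (hC : C.length = B.length) :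
    RCDerives bar k (P ++ A ++ c :: (B ++ C ++ T))
      (P ++ A ++ (c :: (B ++ revCompl bar B ++ bar c ::
        (revCompl bar A ++ C ++ revCompl bar (revCompl bar A ++ C)))) ++ c :: T) := by
  have h₁ := dup (bar := bar) (k := k) P (A ++ c :: B) (C ++ T) (by simp; omega)
  have h₂ := dup (bar := bar) (k := k) (P ++ A ++ c :: (B ++ revCompl bar B))
    (bar c :: (revCompl bar A ++ C)) T (by simp [revCompl]; omega)
  simp only [revCompl, List.map_append, List.map_cons, List.reverse_append, List.reverse_cons,
    hinv c, List.append_assoc, List.cons_append, List.nil_append] at h₁ h₂ ⊢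
  exact h₁.trans h₂

/-- Moves blocks of length `2 min (k - 1) (|M| / 2)`; the first move may need letters of `P`,
later ones borrow from the `2k` letters inserted before `c`. -/
theorem move_gap_of_even (hinv : Function.Involutive bar) (hk : 2 ≤ k) (c : ZMod q) :
    ∀ (M P T : List (ZMod q)), Even M.length → 2 * (k - 1) ≤ 2 * P.length + M.length →
      ∃ E, RCDerives bar k (P ++ c :: (M ++ T)) (P ++ E ++ c :: T) ∧
        M.length ≤ E.length ∧ Even E.length := by
  intro M
  induction hn : M.length using Nat.strong_induction_on generalizing M with
  | _ n ih =>
  intro P T hev hP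
  rcases eq_or_ne M [] with rfl | hM
  · exact ⟨[], by simpa using refl _, by simp [← hn], by simp⟩
  rw [Nat.even_iff] at hev
  have hn2 : 2 ≤ n := by
    have := List.length_pos_iff.mpr hM
    omega
  set m := min (k - 1) (n / 2) with hm
  obtain ⟨B, M₁, rfl, hB⟩ := List.exists_prefix_of_le_length (i := m) (l := M) (by omega)
  obtain ⟨C, M', rfl, hC⟩ := List.exists_prefix_of_le_length (i := m) (l := M₁)
    (by simp at hn; omega)
  obtain ⟨P₀, A, rfl, hA⟩ := List.exists_suffix_of_le_length (i := k - 1 - m) (l := P)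
    (by omega)
  have h₁ := move_block (k := k) hinv P₀ A B C (M' ++ T) c (by omega) (by omega)
  set E₁ := c :: (B ++ revCompl bar B ++ bar c ::
    (revCompl bar A ++ C ++ revCompl bar (revCompl bar A ++ C)))
  have hE₁ : E₁.length = 2 * m + 2 * k := by simp [E₁]; omega
  simp only [List.length_append] at hn
  obtain ⟨E₂, h₂, hE₂, hE₂_even⟩ := ih M'.length (by omega) M' rfl (P₀ ++ A ++ E₁) T
    (by rw [Nat.even_iff]; omega) (by simp only [List.length_append]; omega)
  refine ⟨E₁ ++ E₂, ?_, ?_, ?_⟩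
  · simpa [List.append_assoc] using h₁.trans h₂
  · simp only [List.length_append]; omega
  · rw [Nat.even_iff] at hE₂_even ⊢; simp only [List.length_append]; omega

theorem move_gap (hinv : Function.Involutive bar) (hk : 2 ≤ k) (c : ZMod q)
    (P M T : List (ZMod q))
    (hpar : Even k → Even M.length) (hM : 2 * (k - 1) ≤ M.length) :
    ∃ E, RCDerives bar k (P ++ c :: (M ++ T)) (P ++ E ++ c :: T) ∧
      M.length ≤ E.length ∧ Even E.length := by
  by_cases hev : Even M.length
  · exact move_gap_of_even hinv hk c M P T hev (by omega)
  have hk_odd : ¬ Even k := fun h => hev (hpar h)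
  -- `k` is odd, so duplicating the first `k` letters of `M` makes its length even.
  obtain ⟨V, M₂, rfl, hV⟩ := List.exists_prefix_of_le_length (i := k) (l := M) (by omega)
  have h₁ := dup (bar := bar) (P ++ [c]) V (M₂ ++ T) hV
  obtain ⟨E, h₂, hE, hE_even⟩ := move_gap_of_even hinv hk c (V ++ revCompl bar V ++ M₂) P T
    (by simp only [Nat.even_iff, List.length_append, length_revCompl] at hev hk_odd ⊢; omega)
    (by simp; omega)
  simp only [List.append_assoc, List.cons_append, List.nil_append] at h₁ h₂
  refine ⟨E, by simpa using h₁.trans h₂, by simp at hE ⊢; omega, hE_even⟩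

theorem exists_of_interleave_append (hinv : Function.Involutive bar) (hk : 2 ≤ k) :
    ∀ (x g : List (ZMod q)) (gs : List (List (ZMod q))) (L : List (ZMod q)),
      gs.length = x.length → (Even k → ∀ g' ∈ gs, Even g'.length) →
      2 * (k - 1) ≤ L.length → Even L.length →
      ∃ E, RCDerives bar k (interleave (g :: gs) x ++ L) (g ++ E ++ x) ∧
        2 * (k - 1) ≤ E.length ∧ Even E.length := by
  intro x
  induction x with
  | nil =>
    rintro g gs L hgs - hL hL_even
    rw [List.length_nil, List.length_eq_zero_iff] at hgs
    subst hgs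
    exact ⟨L, by simpa [interleave] using refl _, hL, hL_even⟩
  | cons a x ih =>
    rintro g (_ | ⟨g₁, gs⟩) L hgs hpar hL hL_even
    · simp at hgs
    obtain ⟨E', h₁, hE', hE'_even⟩ := ih g₁ gs L (by simpa using hgs)
      (fun hk g' hg' => hpar hk g' (List.mem_cons_of_mem _ hg')) hL hL_even
    obtain ⟨E, h₂, hE, hE_even⟩ := move_gap hinv hk a g (g₁ ++ E') x
      (fun hk => by simpa using (hpar hk g₁ List.mem_cons_self).add hE'_even)
      (by simp; omega)
    refine ⟨E, ?_, by simp at hE; omega, hE_even⟩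
    simpa [interleave] using h₁.append_left (g ++ [a]) |>.trans (by simpa using h₂)

end RCDerives

theorem stmt11_general {q : ℕ} (bar : ZMod q → ZMod q) (hinv : Function.Involutive bar)
    (k : ℕ) (hk : 2 ≤ k) (x y : List (ZMod q))
    (hps : ProperlySpaced k x y) :
    ∃ v : List (ZMod q),
      RCDerives bar k y (v ++ x) ∧ RCDerives bar k (y ++ x) (v ++ x) := by
  obtain ⟨hx, _ | ⟨g, gs⟩, hgaps, rfl, hpar⟩ := hps
  · simp at hgaps
  have hgs : gs.length = x.length := by simp at hgaps; omega
  obtain ⟨u, v, hy, hv⟩ := List.exists_suffix_of_le_length (i := k)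
    (l := interleave (g :: gs) x) (hx ▸ length_le_length_interleave x g gs hgs)
  have hpad := RCDerives.append_revCompl_append hinv u v hv
  rw [← hy, List.append_assoc] at hpad
  obtain ⟨E, hE, -, -⟩ := RCDerives.exists_of_interleave_append hinv hk x g gs
    (revCompl bar v ++ v) hgs
    (fun hk_even g' hg' => Nat.even_iff.mpr (hpar (Nat.even_iff.mp hk_even) g' hg'))
    (by simp; omega) (by simp [hv])
  have hy_derives := hpad.trans hE
  refine ⟨g ++ E ++ x ++ revCompl bar x, ?_, ?_⟩
  · exact hy_derives.trans (RCDerives.append_revCompl_append hinv _ x hx)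
  · simpa using (hy_derives.trans (RCDerives.append_revCompl (g ++ E) x hx)).append_right x

/-- Synchronization lemma: if `x ∈ Z_q^k` is properly spaced in `y`, then there
is a string `v` with both `y ⟹ₖ* v·x` and `y·x ⟹ₖ* v·x`. -/
theorem stmt11 {q : ℕ} (bar : ZMod q → ZMod q) (hinv : Function.Involutive bar)
    (hfp : ∀ a, bar a ≠ a) (k : ℕ) (hk : 2 ≤ k) (x y : List (ZMod q))
    (hps : ProperlySpaced k x y) :
    ∃ v : List (ZMod q),
      RCDerives bar k y (v ++ x) ∧ RCDerives bar k (y ++ x) (v ++ x) :=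
  stmt11_general bar hinv k hk x y hps
end

section
/- For palindromic duplications of length 1 over Z_q (q ≥ 3), the maximal size of a length-n code correcting any number of duplications is q·((q−1)^n − 1)/(q−2), and the coding capacity is log_q(q−1). -/
/-- One palindromic duplication of length `k`: a `k`-factor `v` of `x`
gets a reversed copy inserted right after it. -/
def PalStep {q : ℕ} (k : ℕ) (x y : List (ZMod q)) : Prop :=
  ∃ u v w : List (ZMod q), v.length = k ∧ x = u ++ v ++ w ∧
    y = u ++ v ++ v.reverse ++ w

/-- Finitely many (possibly zero) palindromic duplications of length `k`. -/
def PalDerives {q : ℕ} (k : ℕ) : List (ZMod q) → List (ZMod q) → Prop :=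
  Relation.ReflTransGen (PalStep k)

/-- `C` is a length-`n` code correcting any number of length-`k` palindromic
duplications: distinct codewords have disjoint descendant cones. -/
def IsPalCode {q : ℕ} (k n : ℕ) (C : Finset (List (ZMod q))) : Prop :=
  (∀ c ∈ C, c.length = n) ∧
    ∀ c ∈ C, ∀ c' ∈ C, c ≠ c' →
      ∀ z, PalDerives k c z → ¬ PalDerives k c' z

/-- The maximal size of such a code. -/
noncomputable def maxPalCode {q : ℕ} (k n : ℕ) : ℕ :=
  sSup {M : ℕ | ∃ C : Finset (List (ZMod q)), IsPalCode k n C ∧ C.card = M}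

/-!
A length-1 duplication repeats a letter, so it does not change the word obtained by collapsing
every run of equal letters to a single letter (`List.destutter (· ≠ ·)`). Conversely, two words
with the same collapsed form have a common descendant: stretch every run of both to one common
length. So a code corrects all such duplications exactly when its words have distinct collapsed
forms, and the largest code of length `n` is as large as the set of stutter-free words of length
`1, …, n`, which has `∑_{ℓ < n} q (q-1)^ℓ` elements. This count lies between `(q-1)^n` and
`q (q-1)^n`, which gives the capacity.
-/

open List

namespace List

variable {α : Type*}

theorem destutter'_append_cons_cons {R : α → α → Prop} [DecidableRel R] {a : α} (h : ¬R a a)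
    (u w : List α) (b : α) :
    (u ++ a :: a :: w).destutter' R b = (u ++ a :: w).destutter' R b := by
  induction u generalizing b with
  | nil => by_cases hba : R b a <;> simp [hba, h]
  | cons c u ih => by_cases hbc : R b c <;> simp [hbc, ih]

theorem destutter_append_cons_cons {R : α → α → Prop} [DecidableRel R] {a : α} (h : ¬R a a)
    (u w : List α) :
    (u ++ a :: a :: w).destutter R = (u ++ a :: w).destutter R := by
  cases u with
  | nil => simp [destutter_cons', h]
  | cons c u => simpa [destutter_cons'] using destutter'_append_cons_cons h u w c

theorem destutter_append_replicate_getLastD [DecidableEq α] {s : List α} (hs : s ≠ [])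
    (hc : s.IsChain (· ≠ ·)) (d : α) (k : ℕ) :
    (s ++ replicate k (s.getLastD d)).destutter (· ≠ ·) = s := by
  obtain ⟨u, a, rfl⟩ := (eq_nil_or_concat s).resolve_left hs
  rw [concat_eq_append] at hc ⊢
  have hdup (k : ℕ) :
      (u ++ a :: replicate k a).destutter (· ≠ ·) = (u ++ [a]).destutter (· ≠ ·) := by
    induction k with
    | zero => rfl
    | succ k ih => rw [replicate_succ, destutter_append_cons_cons (not_not.mpr rfl), ih]
  simpa using (hdup k).trans (destutter_of_isChain _ _ hc)

end List

namespace PalStep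

variable {q k : ℕ} {x y : List (ZMod q)}

theorem append_left (p : List (ZMod q)) (h : PalStep k x y) : PalStep k (p ++ x) (p ++ y) := by
  obtain ⟨u, v, w, hv, rfl, rfl⟩ := h
  exact ⟨p ++ u, v, w, hv, by simp, by simp⟩

theorem append_right (s : List (ZMod q)) (h : PalStep k x y) : PalStep k (x ++ s) (y ++ s) := by
  obtain ⟨u, v, w, hv, rfl, rfl⟩ := h
  exact ⟨u, v, w ++ s, hv, by simp, by simp⟩

theorem destutter_eq (h : PalStep 1 x y) : y.destutter (· ≠ ·) = x.destutter (· ≠ ·) := by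
  obtain ⟨u, v, w, hv, rfl, rfl⟩ := h
  obtain ⟨a, rfl⟩ := length_eq_one_iff.mp hv
  simpa using destutter_append_cons_cons (R := (· ≠ ·)) (not_not.mpr rfl) u w

end PalStep

namespace PalDerives

variable {q k : ℕ} {x y : List (ZMod q)}

theorem append_left (p : List (ZMod q)) (h : PalDerives k x y) :
    PalDerives k (p ++ x) (p ++ y) :=
  Relation.ReflTransGen.lift (p ++ ·) (fun _ _ => PalStep.append_left p) _ _ h

theorem append_right (s : List (ZMod q)) (h : PalDerives k x y) :
    PalDerives k (x ++ s) (y ++ s) :=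
  Relation.ReflTransGen.lift (· ++ s) (fun _ _ => PalStep.append_right s) _ _ h

theorem destutter_eq (h : PalDerives 1 x y) :
    y.destutter (· ≠ ·) = x.destutter (· ≠ ·) := by
  induction h with
  | refl => rfl
  | tail _ hstep ih => rw [hstep.destutter_eq, ih]

theorem replicate_of_le (a : ZMod q) {m M : ℕ} (hm : m ≤ M) :
    PalDerives 1 (List.replicate (m + 1) a) (List.replicate (M + 1) a) := by
  induction M, hm using Nat.le_induction with
  | base => exact .refl
  | succ M _ ih =>
    exact ih.tail ⟨[], [a], List.replicate M a, rfl, by simp [List.replicate_succ],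
      by simp [List.replicate_succ]⟩

end PalDerives

section Code

variable {q : ℕ}

theorem palDerives_replicate_append_flatMap_destutter' (M : ℕ) (t : List (ZMod q)) (a : ZMod q)
    (m : ℕ) (h : m + t.length ≤ M) :
    PalDerives 1 (replicate (m + 1) a ++ t)
      ((t.destutter' (· ≠ ·) a).flatMap (replicate (M + 1))) := by
  induction t generalizing a m with
  | nil => simpa using PalDerives.replicate_of_le a (by simpa using h)
  | cons b s ih =>
    simp only [length_cons] at h
    rw [destutter'_cons]
    split_ifs with hab
    · have hs : PalDerives 1 (b :: s)
          ((s.destutter' (· ≠ ·) b).flatMap (replicate (M + 1))) := by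
        simpa using ih b 0 (by omega)
      rw [flatMap_cons]
      exact ((PalDerives.replicate_of_le a (M := M) (by omega)).append_right _).trans
        (hs.append_left _)
    · obtain rfl : a = b := not_not.mp hab
      simpa [replicate_succ'] using ih a (m + 1) (by omega)

theorem palDerives_flatMap_destutter {x : List (ZMod q)} {M : ℕ} (h : x.length ≤ M + 1) :
    PalDerives 1 x ((x.destutter (· ≠ ·)).flatMap (replicate (M + 1))) := by
  cases x with
  | nil => exact .refl
  | cons a t =>
    simpa [destutter_cons'] using
      palDerives_replicate_append_flatMap_destutter' M t a 0 (by simpa using h)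

theorem isPalCode_one_iff {n : ℕ} {C : Finset (List (ZMod q))} :
    IsPalCode 1 n C ↔
      (∀ c ∈ C, c.length = n) ∧
        Set.InjOn (destutter (· ≠ ·)) (C : Set (List (ZMod q))) := by
  refine and_congr_right fun hlen =>
    ⟨fun hC c hc c' hc' heq => ?_, fun hinj c hc c' hc' hne z hz hz' => ?_⟩
  · by_contra hne
    refine hC c hc c' hc' hne _ (palDerives_flatMap_destutter (M := n) ?_) ?_
    · simp [hlen c hc]
    · rw [heq]
      exact palDerives_flatMap_destutter (by simp [hlen c' hc'])
  · exact hne (hinj hc hc' (hz.destutter_eq.symm.trans hz'.destutter_eq))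

end Code

section Counting

variable {α : Type*} [DecidableEq α] [Fintype α]

def stutterFreeFrom (a : α) : ℕ → Finset (List α)
  | 0 => {[a]}
  | ℓ + 1 => (Finset.univ.erase a).biUnion fun b => (stutterFreeFrom b ℓ).image (a :: ·)

theorem mem_stutterFreeFrom {a : α} {ℓ : ℕ} {l : List α} :
    l ∈ stutterFreeFrom a ℓ ↔
      l.length = ℓ + 1 ∧ l.head? = some a ∧ l.IsChain (· ≠ ·) := by
  induction ℓ generalizing a l with
  | zero =>
    rcases l with _ | ⟨b, _ | ⟨c, s⟩⟩ <;> simp [stutterFreeFrom, eq_comm]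
  | succ ℓ ih =>
    rcases l with _ | ⟨b, _ | ⟨c, s⟩⟩ <;> simp [stutterFreeFrom, ih, eq_comm]
    grind

theorem card_stutterFreeFrom (a : α) (ℓ : ℕ) :
    (stutterFreeFrom a ℓ).card = (Fintype.card α - 1) ^ ℓ := by
  induction ℓ generalizing a with
  | zero => rfl
  | succ ℓ ih =>
    have hdisj : ((Finset.univ.erase a : Finset α) : Set α).PairwiseDisjoint
        fun b => (stutterFreeFrom b ℓ).image (a :: ·) := by
      intro b _ c _ hbc
      simp only [Function.onFun, Finset.disjoint_left, Finset.mem_image]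
      rintro _ ⟨s, hs, rfl⟩ ⟨t, ht, hts⟩
      obtain rfl := List.cons_injective hts
      exact hbc (Option.some_injective _
        ((mem_stutterFreeFrom.mp hs).2.1.symm.trans (mem_stutterFreeFrom.mp ht).2.1))
    rw [stutterFreeFrom, Finset.card_biUnion hdisj]
    simp [Finset.card_image_of_injective _ List.cons_injective, ih, pow_succ']

def stutterFree (α : Type*) [DecidableEq α] [Fintype α] (n : ℕ) : Finset (List α) :=
  (Finset.range n).biUnion fun ℓ => Finset.univ.biUnion fun a => stutterFreeFrom a ℓ

theorem mem_stutterFree {n : ℕ} {l : List α} :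
    l ∈ stutterFree α n ↔ l ≠ [] ∧ l.length ≤ n ∧ l.IsChain (· ≠ ·) := by
  rcases l with _ | ⟨a, t⟩ <;> simp [stutterFree, mem_stutterFreeFrom]

theorem card_stutterFree (n : ℕ) :
    (stutterFree α n).card =
      Fintype.card α * ∑ ℓ ∈ Finset.range n, (Fintype.card α - 1) ^ ℓ := by
  have hdisj_head (ℓ : ℕ) : ((Finset.univ : Finset α) : Set α).PairwiseDisjoint
      fun a => stutterFreeFrom a ℓ := by
    intro a _ b _ hab
    refine Finset.disjoint_left.mpr fun l ha hb => hab (Option.some_injective _ ?_)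
    exact (mem_stutterFreeFrom.mp ha).2.1.symm.trans (mem_stutterFreeFrom.mp hb).2.1
  have hdisj_length : ((Finset.range n : Finset ℕ) : Set ℕ).PairwiseDisjoint
      fun ℓ => Finset.univ.biUnion fun a : α => stutterFreeFrom a ℓ := by
    intro ℓ _ m _ hℓm
    refine Finset.disjoint_left.mpr fun l hℓ hm => hℓm ?_
    simp only [Finset.mem_biUnion, Finset.mem_univ, true_and, mem_stutterFreeFrom] at hℓ hm
    obtain ⟨_, hℓ, -⟩ := hℓ
    obtain ⟨_, hm, -⟩ := hm
    omega
  simp [stutterFree, Finset.card_biUnion hdisj_length, Finset.card_biUnion (hdisj_head _),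
    card_stutterFreeFrom, Finset.mul_sum]

end Counting

theorem isGreatest_card_isPalCode_one {q n : ℕ} [NeZero q] (hn : 1 ≤ n) :
    IsGreatest {M | ∃ C : Finset (List (ZMod q)), IsPalCode 1 n C ∧ C.card = M}
      (stutterFree (ZMod q) n).card := by
  constructor
  · set pad : List (ZMod q) → List (ZMod q) :=
      fun s => s ++ replicate (n - s.length) (s.getLastD 0)
    have destutter_pad {s} (hs : s ∈ stutterFree (ZMod q) n) :
        (pad s).destutter (· ≠ ·) = s := by
      obtain ⟨hne, -, hc⟩ := mem_stutterFree.mp hs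
      exact destutter_append_replicate_getLastD hne hc 0 _
    have pad_injOn : Set.InjOn pad (stutterFree (ZMod q) n) := fun s hs s' hs' h => by
      rw [← destutter_pad hs, ← destutter_pad hs', h]
    refine ⟨_, isPalCode_one_iff.mpr ⟨?_, ?_⟩, Finset.card_image_of_injOn pad_injOn⟩
    · simp only [Finset.mem_image, forall_exists_index, and_imp, forall_apply_eq_imp_iff₂]
      intro s hs
      have := (mem_stutterFree.mp hs).2.1
      simp only [pad, length_append, length_replicate]
      omega
    · rintro _ hc _ hc' h
      simp only [Finset.coe_image, Set.mem_image, Finset.mem_coe] at hc hc'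
      obtain ⟨s, hs, rfl⟩ := hc
      obtain ⟨s', hs', rfl⟩ := hc'
      rw [destutter_pad hs, destutter_pad hs'] at h
      rw [h]
  · rintro _ ⟨C, hC, rfl⟩
    obtain ⟨hlen, hinj⟩ := isPalCode_one_iff.mp hC
    refine Finset.card_le_card_of_injOn _ (fun c hc => mem_stutterFree.mpr ⟨?_, ?_, ?_⟩) hinj
    · exact (destutter_eq_nil _).not.mpr (ne_nil_of_length_pos (by rw [hlen c hc]; omega))
    · exact (destutter_sublist _ c).length_le.trans (hlen c hc).le
    · exact isChain_destutter _ c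

theorem Nat.geomSum_le_pow {m : ℕ} (hm : 2 ≤ m) (n : ℕ) :
    ∑ i ∈ Finset.range n, m ^ i ≤ m ^ n := by
  rw [Nat.geomSum_eq hm]
  exact (Nat.div_le_self _ _).trans (Nat.sub_le _ _)

theorem Nat.pow_le_succ_mul_geomSum (m : ℕ) {n : ℕ} (hn : 1 ≤ n) :
    m ^ n ≤ (m + 1) * ∑ i ∈ Finset.range n, m ^ i := by
  obtain ⟨n, rfl⟩ := Nat.exists_eq_add_of_le' hn
  rw [pow_succ']
  exact Nat.mul_le_mul (Nat.le_succ m)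
    (Finset.single_le_sum (fun _ _ => Nat.zero_le _) (Finset.self_mem_range_succ n))

theorem Nat.mul_geomSum_sub_one {q : ℕ} (hq : 3 ≤ q) (n : ℕ) :
    q * ∑ i ∈ Finset.range n, (q - 1) ^ i = q * ((q - 1) ^ n - 1) / (q - 2) := by
  have h : q - 2 = q - 1 - 1 := by omega
  rw [Nat.geomSum_eq (by omega), ← h, Nat.mul_div_assoc _ (h ▸ Nat.sub_one_dvd_pow_sub_one _ _)]

open Filter Topology in
theorem Real.tendsto_log_div_of_le_of_le {N : ℕ → ℝ} {b c C : ℝ} (hb : 0 < b) (hc : 0 < c)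
    (hC : 0 < C) (hlow : ∀ᶠ n in atTop, c * b ^ n ≤ N n)
    (hup : ∀ᶠ n in atTop, N n ≤ C * b ^ n) :
    Tendsto (fun n : ℕ => Real.log (N n) / n) atTop (𝓝 (Real.log b)) := by
  have hK {K : ℝ} (hK : 0 < K) :
      Tendsto (fun n : ℕ => Real.log (K * b ^ n) / n) atTop (𝓝 (Real.log b)) := by
    have hlim : Tendsto (fun n : ℕ => Real.log K / n + Real.log b) atTop
        (𝓝 (0 + Real.log b)) :=
      (tendsto_const_div_atTop_nhds_zero_nat _).add_const _
    rw [zero_add] at hlim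
    refine hlim.congr' ?_
    filter_upwards [eventually_ne_atTop 0] with n hn
    rw [Real.log_mul hK.ne' (pow_pos hb n).ne', Real.log_pow]
    field_simp
  refine tendsto_of_tendsto_of_tendsto_of_le_of_le' (hK hc) (hK hC) ?_ ?_
  · filter_upwards [hlow] with n hn
    exact div_le_div_of_nonneg_right (Real.log_le_log (by positivity) hn) n.cast_nonneg
  · filter_upwards [hlow, hup] with n hl hu
    exact div_le_div_of_nonneg_right
      (Real.log_le_log ((by positivity : 0 < c * b ^ n).trans_le hl) hu) n.cast_nonneg

theorem card_stutterFree_zmod {q : ℕ} [NeZero q] (n : ℕ) :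
    (stutterFree (ZMod q) n).card = q * ∑ i ∈ Finset.range n, (q - 1) ^ i := by
  rw [card_stutterFree, ZMod.card]

theorem maxPalCode_one_bounds {q n : ℕ} (hq : 3 ≤ q) (hn : 1 ≤ n) :
    ((q : ℝ) - 1) ^ n ≤ maxPalCode (q := q) 1 n ∧
      (maxPalCode (q := q) 1 n : ℝ) ≤ q * ((q : ℝ) - 1) ^ n := by
  have : NeZero q := ⟨by omega⟩
  have hcast : ((q - 1 : ℕ) : ℝ) = q - 1 := by norm_num [Nat.cast_sub (by omega : 1 ≤ q)]
  rw [maxPalCode, (isGreatest_card_isPalCode_one hn).csSup_eq, card_stutterFree_zmod, ← hcast]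
  constructor
  · have := Nat.pow_le_succ_mul_geomSum (q - 1) hn
    rw [Nat.sub_add_cancel (by omega)] at this
    exact_mod_cast this
  · exact_mod_cast Nat.mul_le_mul_left q (Nat.geomSum_le_pow (by omega) n)

/-- For `q ≥ 3` and `n ≥ 1`, the maximal size of a length-`n` `q`-ary code
correcting any number of length-1 palindromic duplications equals
`q·((q−1)^n − 1)/(q−2)`, and the coding capacity is `log_q (q−1)`. -/
theorem stmt14 {q : ℕ} (hq : 3 ≤ q) :
    (∀ n : ℕ, 1 ≤ n →
      IsGreatest {M : ℕ | ∃ C : Finset (List (ZMod q)),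
        IsPalCode 1 n C ∧ C.card = M} (q * ((q - 1) ^ n - 1) / (q - 2))) ∧
    Filter.limsup (fun n : ℕ => Real.logb q ((maxPalCode (q := q) 1 n : ℕ) : ℝ) / n)
      Filter.atTop = Real.logb q (q - 1) := by
  have : NeZero q := ⟨by omega⟩
  refine ⟨fun n hn => ?_, Filter.Tendsto.limsup_eq ?_⟩
  · rw [← Nat.mul_geomSum_sub_one hq, ← card_stutterFree_zmod]
    exact isGreatest_card_isPalCode_one hn
  have hq' : (3 : ℝ) ≤ q := by exact_mod_cast hq
  have hlim := (Real.tendsto_log_div_of_le_of_le (N := fun n => (maxPalCode (q := q) 1 n : ℝ))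
    (b := q - 1) (c := 1) (C := q) (by linarith) one_pos (by linarith) ?_ ?_).div_const
    (Real.log q)
  · simpa [Real.logb, div_right_comm] using hlim
  · filter_upwards [Filter.eventually_ge_atTop 1] with n hn
    simpa using (maxPalCode_one_bounds hq hn).1
  · filter_upwards [Filter.eventually_ge_atTop 1] with n hn
    exact (maxPalCode_one_bounds hq hn).2
end

section
/- Palindromic push lemma: let k ≥ 2, let x ∈ Z_q* with |x| ≥ k+1, and let i ≥ 2. If a is the i-th letter from the end of x, then there exists x' obtainable from x by exactly two palindromic duplications of length k in which a is the (i−2)-nd letter from the end. Explicitly, writing x = u·v·b·c·w with |v| = k−1 and a occurring in v, one has x ⟹_k u·v·b·b·v^R·c·w ⟹_k u·v·b·b·v^R·c·c·v·w. -/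
lemma palstep_two {q : ℕ} (k : ℕ) (hk : 1 ≤ k) (u v w : List (ZMod q)) (b c : ZMod q)
    (hv : v.length = k - 1) :
    PalStep k (u ++ v ++ b :: c :: w) (u ++ v ++ b :: b :: (v.reverse ++ c :: w)) ∧
    PalStep k (u ++ v ++ b :: b :: (v.reverse ++ c :: w))
      (u ++ v ++ b :: b :: (v.reverse ++ c :: c :: (v ++ w))) := by
  constructor
  · exact ⟨u, v ++ [b], c :: w, by simp [hv]; omega, by simp, by simp⟩
  · exact ⟨u ++ v ++ [b, b], v.reverse ++ [c], w, by simp [hv]; omega, by simp, by simp⟩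

/-- Palindromic push lemma: if `k ≥ 2`, `|x| ≥ k+1`, `i ≥ 2` and `a` is the
`i`-th letter from the end of `x`, then two palindromic duplications of length
`k` produce a string with `a` as the `(i−2)`-nd letter from the end; explicitly,
writing `x = u·v·b·c·w` with `|v| = k−1` and `a` occurring in `v`,
`x ⟹ₖ u·v·b·b·v^R·c·w ⟹ₖ u·v·b·b·v^R·c·c·v·w`. -/
theorem stmt16 {q : ℕ} (k i : ℕ) (hk : 2 ≤ k) (hi : 2 ≤ i)
    (x w1 w2 : List (ZMod q)) (a : ZMod q)
    (hlen : k + 1 ≤ x.length) (hx : x = w1 ++ a :: w2) (hw : w2.length = i) :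
    (∃ x' z w1' w2' : List (ZMod q), PalStep k x z ∧ PalStep k z x' ∧
      x' = w1' ++ a :: w2' ∧ w2'.length = i - 2) ∧
    (∀ u v w : List (ZMod q), ∀ b c : ZMod q,
      x = u ++ v ++ b :: c :: w → v.length = k - 1 → a ∈ v →
        PalStep k x (u ++ v ++ b :: b :: (v.reverse ++ c :: w)) ∧
        PalStep k (u ++ v ++ b :: b :: (v.reverse ++ c :: w))
          (u ++ v ++ b :: b :: (v.reverse ++ c :: c :: (v ++ w)))) := by
  constructor
  · subst hx
    simp only [List.length_append, List.length_cons] at hlen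
    by_cases hA : k - 2 ≤ w1.length
    · -- a is the last letter of v
      obtain ⟨b, c, w, rfl⟩ : ∃ b c w, w2 = b :: c :: w := by
        rcases w2 with _ | ⟨b, _ | ⟨c, w⟩⟩
        · simp at hw; omega
        · simp at hw; omega
        · exact ⟨b, c, w, rfl⟩
      set u := w1.take (w1.length - (k - 2)) with hu
      set p := w1.drop (w1.length - (k - 2)) with hp
      have hup : u ++ p = w1 := List.take_append_drop _ _
      have hplen : p.length = k - 2 := by
        simp [hp]; omega
      set v := p ++ [a] with hv
      have hvlen : v.length = k - 1 := by simp [hv, hplen]; omega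
      have hxeq : w1 ++ a :: b :: c :: w = u ++ v ++ b :: c :: w := by
        rw [← hup]; simp [hv]
      obtain ⟨h1, h2⟩ := palstep_two k (by omega) u v w b c hvlen
      refine ⟨_, _, u ++ v ++ [b, b] ++ v.reverse ++ [c, c] ++ p, w,
        hxeq ▸ h1, h2, ?_, ?_⟩
      · simp [hv]
      · simp at hw ⊢; omega
    · -- a is inside v, u = []
      push_neg at hA
      obtain ⟨t, b, c, w, rfl, htlen⟩ :
          ∃ t b c w, w2 = t ++ b :: c :: w ∧ t.length = k - 2 - w1.length := by
        have htlen2 : (w2.take (k - 2 - w1.length)).length = k - 2 - w1.length := by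
          simp; omega
        have hrlen : 2 ≤ (w2.drop (k - 2 - w1.length)).length := by
          simp; omega
        rcases hdr : w2.drop (k - 2 - w1.length) with _ | ⟨b, _ | ⟨c, w⟩⟩
        · rw [hdr] at hrlen; simp at hrlen
        · rw [hdr] at hrlen; simp at hrlen
        · exact ⟨_, b, c, w, by nth_rewrite 1 [← List.take_append_drop (k - 2 - w1.length) w2]; rw [hdr], htlen2⟩
      set v := w1 ++ a :: t with hv2
      have hvlen : v.length = k - 1 := by simp [hv2, htlen]; omega
      have hxeq : w1 ++ a :: (t ++ b :: c :: w) = [] ++ v ++ b :: c :: w := by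
        simp [hv2]
      obtain ⟨h1, h2⟩ := palstep_two k (by omega) [] v w b c hvlen
      refine ⟨_, _, [] ++ v ++ [b, b] ++ v.reverse ++ [c, c] ++ w1, t ++ w,
        hxeq ▸ h1, h2, ?_, ?_⟩
      · simp [hv2]
      · simp [htlen] at hw ⊢; omega
  · intro u v w b c hx2 hv ha
    subst hx2
    exact palstep_two k (by omega) u v w b c hv
end

section
/- If a string x of length k is properly spaced in y and y' is any descendant of y under palindromic duplications of length k (k ≥ 2), then x is properly spaced in y'. -/
/-!
Every position of `y = y⁽⁰⁾x₀y⁽¹⁾⋯x_{k-1}y⁽ᵏ⁾` lies inside some gap `y⁽ⁱ⁾`, so inserting a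
block `B` anywhere in `y` only lengthens one gap by `|B|`. A palindromic duplication of length
`k` inserts a block of length `k`; when `k` is even this keeps every gap length even.
-/

theorem List.Forall₂.forall_mem_right_s19 {α β : Type*} {R : α → β → Prop} {P : α → Prop}
    {Q : β → Prop} (hRPQ : ∀ a b, R a b → P a → Q b) :
    ∀ {l₁ l₂}, List.Forall₂ R l₁ l₂ → (∀ a ∈ l₁, P a) → ∀ b ∈ l₂, Q b
  | _, _, .nil, _ => by simp
  | _, _, .cons hab h, hP => by
    simp only [List.forall_mem_cons] at hP ⊢
    exact ⟨hRPQ _ _ hab hP.1, h.forall_mem_right_s19 hRPQ hP.2⟩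

section Insertion

variable {α : Type*}

def GapInsert (B g g' : List α) : Prop :=
  g' = g ∨ ∃ g₁ g₂, g = g₁ ++ g₂ ∧ g' = g₁ ++ B ++ g₂

theorem GapInsert.length_mod_two {B g g' : List α} (h : GapInsert B g g')
    (hB : B.length % 2 = 0) : g'.length % 2 = g.length % 2 := by
  obtain rfl | ⟨g₁, g₂, rfl, rfl⟩ := h
  · rfl
  · simp only [List.length_append]
    omega

theorem exists_interleave_insert (B : List α) :
    ∀ (x : List α) (gaps : List (List α)) (A C : List α), x.length < gaps.length →
      interleave gaps x = A ++ C →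
      ∃ gaps', interleave gaps' x = A ++ B ++ C ∧ List.Forall₂ (GapInsert B) gaps gaps'
  | [], g :: gs, A, C, _, h => by
    simp only [interleave] at h
    exact ⟨(A ++ B ++ C) :: gs, rfl,
      .cons (.inr ⟨A, C, h, rfl⟩) (List.forall₂_same.mpr fun _ _ ↦ .inl rfl)⟩
  | a :: as, g :: gs, A, C, hlen, h => by
    have hrefl : List.Forall₂ (GapInsert B) gs gs := List.forall₂_same.mpr fun _ _ ↦ .inl rfl
    simp only [interleave] at h
    rcases List.append_eq_append_iff.mp h with ⟨_ | ⟨b, t⟩, rfl, hC⟩ | ⟨t, rfl, rfl⟩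
    · refine ⟨(g ++ B) :: gs, ?_, .cons (.inr ⟨g, [], by simp, by simp⟩) hrefl⟩
      simpa [interleave] using hC
    · obtain ⟨rfl, hrest⟩ : a = b ∧ interleave gs as = t ++ C := by simpa using hC
      obtain ⟨gs', hgs', hrel⟩ :=
        exists_interleave_insert B as gs t C (by simpa using hlen) hrest
      exact ⟨g :: gs', by simp [interleave, hgs'], .cons (.inl rfl) hrel⟩
    · exact ⟨(A ++ B ++ t) :: gs, by simp [interleave], .cons (.inr ⟨A, t, rfl, rfl⟩) hrefl⟩

theorem ProperlySpaced.append_insert {k : ℕ} {x A B C : List α}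
    (hps : ProperlySpaced k x (A ++ C)) (hB : k % 2 = 0 → B.length % 2 = 0) :
    ProperlySpaced k x (A ++ B ++ C) := by
  obtain ⟨hx, gaps, hlen, hy, heven⟩ := hps
  obtain ⟨gaps', hy', hrel⟩ :=
    exists_interleave_insert B x gaps A C (by omega) hy.symm
  refine ⟨hx, gaps', hrel.length_eq ▸ hlen, hy'.symm, fun hk ↦ ?_⟩
  have hrel_tail := List.forall₂_drop 1 hrel
  rw [List.drop_one, List.drop_one] at hrel_tail
  exact hrel_tail.forall_mem_right_s19
    (fun g g' hg hg0 ↦ (hg.length_mod_two (hB hk)).trans hg0) (heven hk)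

end Insertion

theorem ProperlySpaced.of_palStep {q k : ℕ} {x y y' : List (ZMod q)}
    (hps : ProperlySpaced k x y) (h : PalStep k y y') : ProperlySpaced k x y' := by
  obtain ⟨u, v, w, hv, rfl, rfl⟩ := h
  exact hps.append_insert (by simp [hv])

theorem stmt19_general {q : ℕ} (k : ℕ) (x y y' : List (ZMod q))
    (hps : ProperlySpaced k x y) (h : PalDerives k y y') :
    ProperlySpaced k x y' := by
  induction h with
  | refl => exact hps
  | tail _ hstep ih => exact ih.of_palStep hstep

/-- Proper spacing persists under length-`k` palindromic duplications. -/
theorem stmt19 {q : ℕ} (k : ℕ) (hk : 2 ≤ k) (x y y' : List (ZMod q))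
    (hps : ProperlySpaced k x y) (h : PalDerives k y y') :
    ProperlySpaced k x y' :=
  stmt19_general k x y y' hps h
end
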